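/- arXiv:2305.01444 — 4 statements merged into one kernel-verified Lean document; each statement's English description precedes it below -/
import Mathlib

section
/- Every k-arc-connected digraph D = (V, A) has a spanning k-arc-connected subgraph D' = (V, A') with |A'| ≤ 2k(|V| − 1). -/
open Finset

variable {V α : Type*} [Fintype V] [DecidableEq V] [Fintype α] [DecidableEq α]

/-- number of arcs of `A` entering `X` (tail outside, head inside). -/
def inDeg (tail head : α → V) (A : Finset α) (X : Finset V) : ℕ :=
  (A.filter fun a => tail a ∉ X ∧ head a ∈ X).card

/-- number of arcs of `A` leaving `X`. -/
def outDeg (tail head : α → V) (A : Finset α) (X : Finset V) : ℕ :=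
  (A.filter fun a => tail a ∈ X ∧ head a ∉ X).card

/-- number of arcs of `A` with tail in `S` and head in `T`. -/
def cnt (tail head : α → V) (A : Finset α) (S T : Finset V) : ℕ :=
  (A.filter fun a => tail a ∈ S ∧ head a ∈ T).card

/-- arc-connectivity: minimum in-degree over nonempty proper vertex sets. -/
noncomputable def lam (tail head : α → V) (A : Finset α) : ℕ :=
  sInf {n | ∃ X : Finset V, X.Nonempty ∧ X ≠ Finset.univ ∧ inDeg tail head A X = n}

/-- tail map after reversing the arcs of `F`. -/
def rTail (tail head : α → V) (F : Finset α) : α → V :=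
  fun a => if a ∈ F then head a else tail a

/-- head map after reversing the arcs of `F`. -/
def rHead (tail head : α → V) (F : Finset α) : α → V :=
  fun a => if a ∈ F then tail a else head a

/-- number of edges of the (underlying) undirected multigraph crossing `X`. -/
def edgeCut (e₁ e₂ : α → V) (E : Finset α) (X : Finset V) : ℕ :=
  (E.filter fun e => (e₁ e ∈ X ∧ e₂ e ∉ X) ∨ (e₁ e ∉ X ∧ e₂ e ∈ X)).card

/-- tail map of the orientation of an undirected multigraph given by `σ`. -/
def oT (e₁ e₂ : α → V) (σ : α → Bool) : α → V := fun a => if σ a then e₁ a else e₂ a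

/-- head map of the orientation of an undirected multigraph given by `σ`. -/
def oH (e₁ e₂ : α → V) (σ : α → Bool) : α → V := fun a => if σ a then e₂ a else e₁ a

set_option linter.unusedSectionVars false

private lemma inDeg_mono (tail head : α → V) {A B : Finset α} (h : A ⊆ B) (X : Finset V) :
    inDeg tail head A X ≤ inDeg tail head B X :=
  Finset.card_le_card (Finset.filter_subset_filter _ h)

private lemma inDeg_submod (tail head : α → V) (F : Finset α) (X Y : Finset V) :
    inDeg tail head F (X ∩ Y) + inDeg tail head F (X ∪ Y)
      ≤ inDeg tail head F X + inDeg tail head F Y := by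
  classical
  unfold inDeg
  rw [Finset.card_filter, Finset.card_filter, Finset.card_filter, Finset.card_filter,
    ← Finset.sum_add_distrib, ← Finset.sum_add_distrib]
  apply Finset.sum_le_sum
  intro a _
  by_cases h1 : tail a ∈ X <;> by_cases h2 : tail a ∈ Y <;>
    by_cases h3 : head a ∈ X <;> by_cases h4 : head a ∈ Y <;>
    simp [Finset.mem_inter, Finset.mem_union, h1, h2, h3, h4]

private lemma coverE (tail head : α → V) (A : Finset α) (r : V) (k : ℕ)
    (hA : ∀ X : Finset V, X.Nonempty → r ∉ X → k ≤ inDeg tail head A X) :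
    ∃ F ⊆ A, (∀ X : Finset V, X.Nonempty → r ∉ X → k ≤ inDeg tail head F X) ∧
      F.card ≤ k * (Fintype.card V - 1) := by
  classical
  set P : Finset α → Prop := fun F =>
    F ⊆ A ∧ ∀ X : Finset V, X.Nonempty → r ∉ X → k ≤ inDeg tail head F X with hP
  have hSne : (Finset.univ.filter P).Nonempty :=
    ⟨A, Finset.mem_filter.mpr ⟨Finset.mem_univ _, Finset.Subset.refl _, hA⟩⟩
  obtain ⟨F, hFmem, hFmin⟩ := Finset.exists_min_image _ Finset.card hSne
  rw [Finset.mem_filter] at hFmem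
  obtain ⟨-, hFA, hFprop⟩ := hFmem
  refine ⟨F, hFA, hFprop, ?_⟩
  -- every arc of F enters a tight set avoiding r
  have htight : ∀ a ∈ F, ∃ X : Finset V, r ∉ X ∧ tail a ∉ X ∧ head a ∈ X ∧
      inDeg tail head F X = k := by
    intro a ha
    have herase : ∃ X : Finset V, X.Nonempty ∧ r ∉ X ∧ inDeg tail head (F.erase a) X < k := by
      by_contra hno
      push_neg at hno
      have hPe : P (F.erase a) :=
        ⟨(Finset.erase_subset a F).trans hFA, fun X h1 h2 => hno X h1 h2⟩
      have h1 := hFmin (F.erase a) (Finset.mem_filter.mpr ⟨Finset.mem_univ _, hPe⟩)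
      have h2 := Finset.card_erase_lt_of_mem ha
      omega
    obtain ⟨X, hXne, hXr, hXlt⟩ := herase
    have hin : a ∈ F.filter (fun a => tail a ∉ X ∧ head a ∈ X) := by
      by_contra hnot
      have heq : inDeg tail head (F.erase a) X = inDeg tail head F X := by
        unfold inDeg
        rw [Finset.filter_erase, Finset.erase_eq_of_notMem hnot]
      have := hFprop X hXne hXr
      omega
    have h1 : inDeg tail head (F.erase a) X + 1 = inDeg tail head F X := by
      unfold inDeg
      rw [Finset.filter_erase, Finset.card_erase_add_one hin]
    rw [Finset.mem_filter] at hin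
    have := hFprop X hXne hXr
    exact ⟨X, hXr, hin.2.1, hin.2.2, by omega⟩
  -- no arcs enter r
  have hr : (F.filter (fun a => head a = r)).card = 0 := by
    rw [Finset.card_eq_zero, Finset.filter_eq_empty_iff]
    intro a ha hhead
    obtain ⟨X, hXr, -, hhX, -⟩ := htight a ha
    rw [hhead] at hhX
    exact hXr hhX
  -- each other vertex has in-degree at most k
  have hv : ∀ v : V, v ≠ r → (F.filter (fun a => head a = v)).card ≤ k := by
    intro v hvr
    rcases Finset.eq_empty_or_nonempty (F.filter (fun a => head a = v)) with he | ⟨a0, ha0⟩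
    · simp [he]
    rw [Finset.mem_filter] at ha0
    set T : Finset (Finset V) := Finset.univ.filter
      (fun X => v ∈ X ∧ r ∉ X ∧ inDeg tail head F X = k) with hT
    have hTne : T.Nonempty := by
      obtain ⟨X, hXr, hXt, hXh, hXd⟩ := htight a0 ha0.1
      refine ⟨X, Finset.mem_filter.mpr ⟨Finset.mem_univ _, ?_, hXr, hXd⟩⟩
      rw [← ha0.2]; exact hXh
    obtain ⟨M, hMmem, hMmin⟩ := Finset.exists_min_image T Finset.card hTne
    rw [hT, Finset.mem_filter] at hMmem
    obtain ⟨-, hvM, hrM, hMdeg⟩ := hMmem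
    have hMsub : ∀ X ∈ T, M ⊆ X := by
      intro X hX
      rw [hT, Finset.mem_filter] at hX
      obtain ⟨-, hvX, hrX, hXdeg⟩ := hX
      have hne : (M ∩ X).Nonempty := ⟨v, Finset.mem_inter.mpr ⟨hvM, hvX⟩⟩
      have hrMX : r ∉ M ∩ X := fun h => hrM (Finset.mem_inter.mp h).1
      have hge : k ≤ inDeg tail head F (M ∩ X) := hFprop _ hne hrMX
      have hgeU : k ≤ inDeg tail head F (M ∪ X) := by
        refine hFprop _ ⟨v, Finset.mem_union_left _ hvM⟩ ?_
        intro h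
        rcases Finset.mem_union.mp h with h | h
        · exact hrM h
        · exact hrX h
      have hsub := inDeg_submod tail head F M X
      have hMXdeg : inDeg tail head F (M ∩ X) = k := by omega
      have hTmem : M ∩ X ∈ T :=
        Finset.mem_filter.mpr ⟨Finset.mem_univ _,
          Finset.mem_inter.mpr ⟨hvM, hvX⟩, hrMX, hMXdeg⟩
      have hcard := hMmin _ hTmem
      exact Finset.inter_eq_left.mp
        (Finset.eq_of_subset_of_card_le Finset.inter_subset_left hcard)
    have hsubset : F.filter (fun a => head a = v) ⊆
        F.filter (fun a => tail a ∉ M ∧ head a ∈ M) := by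
      intro a ha
      rw [Finset.mem_filter] at ha ⊢
      obtain ⟨haF, hah⟩ := ha
      obtain ⟨X, hXr, hXt, hXh, hXdeg⟩ := htight a haF
      have hXT : X ∈ T := by
        refine Finset.mem_filter.mpr ⟨Finset.mem_univ _, ?_, hXr, hXdeg⟩
        rw [← hah]; exact hXh
      refine ⟨haF, fun h => hXt (hMsub X hXT h), ?_⟩
      rw [hah]; exact hvM
    calc (F.filter (fun a => head a = v)).card
        ≤ (F.filter (fun a => tail a ∉ M ∧ head a ∈ M)).card := Finset.card_le_card hsubset
      _ = k := hMdeg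
  -- count
  have hcount : F.card = ∑ v : V, (F.filter fun a => head a = v).card :=
    Finset.card_eq_sum_card_fiberwise (fun x _ => Finset.mem_univ (head x))
  rw [hcount, ← Finset.add_sum_erase Finset.univ _ (Finset.mem_univ r), hr, zero_add]
  calc ∑ v ∈ Finset.univ.erase r, (F.filter fun a => head a = v).card
      ≤ ∑ _v ∈ Finset.univ.erase r, k :=
        Finset.sum_le_sum (fun v hv0 => hv v (Finset.ne_of_mem_erase hv0))
    _ = (Fintype.card V - 1) * k := by
        rw [Finset.sum_const, Finset.card_erase_of_mem (Finset.mem_univ r), smul_eq_mul,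
          Finset.card_univ]
    _ = k * (Fintype.card V - 1) := mul_comm _ _

private lemma inDeg_rev (tail head : α → V) (A : Finset α) (X : Finset V) :
    inDeg head tail A X = inDeg tail head A Xᶜ := by
  unfold inDeg
  congr 1
  apply Finset.filter_congr
  intro a _
  simp only [Finset.mem_compl, not_not]
  tauto

/-- Dalmazzo: every `k`-arc-connected digraph has a spanning `k`-arc-connected
subgraph with at most `2k(|V|-1)` arcs. -/
theorem stmt9 (tail head : α → V) (A : Finset α) (k : ℕ) (hV : 2 ≤ Fintype.card V)
    (hk : k ≤ lam tail head A) :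
    ∃ A' ⊆ A, k ≤ lam tail head A' ∧ A'.card ≤ 2 * k * (Fintype.card V - 1) := by
  classical
  have hne : Nonempty V := Fintype.card_pos_iff.mp (by omega)
  obtain ⟨r⟩ := hne
  have hlow : ∀ X : Finset V, X.Nonempty → X ≠ Finset.univ → k ≤ inDeg tail head A X := by
    intro X h1 h2
    exact hk.trans (Nat.sInf_le ⟨X, h1, h2, rfl⟩)
  have hA1 : ∀ X : Finset V, X.Nonempty → r ∉ X → k ≤ inDeg tail head A X := by
    intro X h1 h2
    exact hlow X h1 (fun h => h2 (h ▸ Finset.mem_univ r))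
  have hA2 : ∀ X : Finset V, X.Nonempty → r ∉ X → k ≤ inDeg head tail A X := by
    intro X h1 h2
    rw [inDeg_rev]
    refine hlow Xᶜ ⟨r, Finset.mem_compl.mpr h2⟩ ?_
    intro h
    obtain ⟨x, hx⟩ := h1
    have : x ∈ Xᶜ := h ▸ Finset.mem_univ x
    exact Finset.mem_compl.mp this hx
  obtain ⟨F1, hF1A, hF1p, hF1c⟩ := coverE tail head A r k hA1
  obtain ⟨F2, hF2A, hF2p, hF2c⟩ := coverE head tail A r k hA2
  refine ⟨F1 ∪ F2, Finset.union_subset hF1A hF2A, ?_, ?_⟩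
  · apply le_csInf
    · refine ⟨inDeg tail head (F1 ∪ F2) {r}, {r}, ⟨r, Finset.mem_singleton_self r⟩, ?_, rfl⟩
      intro h
      have h1 : ({r} : Finset V).card = Fintype.card V := by
        rw [h, Finset.card_univ]
      rw [Finset.card_singleton] at h1
      omega
    · rintro n ⟨X, hXne, hXuniv, rfl⟩
      by_cases hr : r ∈ X
      · have h1 : Xᶜ.Nonempty := by
          rw [Finset.nonempty_iff_ne_empty]
          intro h
          exact hXuniv (by rwa [Finset.compl_eq_empty_iff] at h)
        have h2 : r ∉ Xᶜ := by simp [hr]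
        have h3 := hF2p Xᶜ h1 h2
        rw [inDeg_rev, compl_compl] at h3
        exact h3.trans (inDeg_mono tail head Finset.subset_union_right X)
      · exact (hF1p X hXne hr).trans (inDeg_mono tail head Finset.subset_union_left X)
  · calc (F1 ∪ F2).card ≤ F1.card + F2.card := Finset.card_union_le _ _
      _ ≤ k * (Fintype.card V - 1) + k * (Fintype.card V - 1) := Nat.add_le_add hF1c hF2c
      _ = 2 * k * (Fintype.card V - 1) := by ring
end

section
/- An undirected multigraph G admits an orientation D with λ(D) ≥ 1 (i.e., a strongly connected orientation) if and only if G is 2-edge-connected. -/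
open Finset

variable {V α : Type*} [Fintype V] [DecidableEq V] [Fintype α] [DecidableEq α]

/-!
Fix a vertex `v` and choose an orientation whose strong component `K` of `v` is as large as
possible. If `K ≠ V`, take an edge `e₀` joining `u ∈ K` to `z ∉ K`. Among the orientations that
keep the arcs inside `K`, one maximising the set `R` of vertices reachable from `z` in `G - e₀`
reaches `K`: otherwise `R` is a nonempty proper set missing `K`, so besides `e₀` some edge crosses
`R`; it must enter `R` (`R` is closed under out-arcs), and reversing it enlarges `R`. Orienting
`e₀` from `u` to `z` then puts `z` into the strong component of `v`, contradicting maximality.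
-/

open Function

def Reachable (t h : α → V) (A : Finset α) : V → V → Prop :=
  Relation.ReflTransGen fun x y => ∃ a ∈ A, t a = x ∧ h a = y

open Classical in
noncomputable def component (t h : α → V) (A : Finset α) (v : V) : Finset V :=
  univ.filter fun x => Reachable t h A v x ∧ Reachable t h A x v

section Digraph

omit [Fintype V] [DecidableEq V] [Fintype α] [DecidableEq α]

variable {t h t' h' : α → V} {A B : Finset α} {v x y z : V}

lemma reachable_arc {a : α} (ha : a ∈ A) : Reachable t h A (t a) (h a) :=
  .single ⟨a, ha, rfl, rfl⟩

lemma Reachable.mono (hAB : A ⊆ B) (hxy : Reachable t h A x y) : Reachable t h B x y :=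
  Relation.ReflTransGen.mono (fun _ _ ⟨a, ha, hx, hy⟩ => ⟨a, hAB ha, hx, hy⟩) _ _ hxy

lemma Reachable.swap (hxy : Reachable t h A x y) : Reachable h t A y x := by
  induction hxy with
  | refl => exact .refl
  | tail _ hstep ih =>
    obtain ⟨a, ha, rfl, rfl⟩ := hstep
    exact .head ⟨a, ha, rfl, rfl⟩ ih

lemma reachable_swap : Reachable h t A x y ↔ Reachable t h A y x :=
  ⟨Reachable.swap, Reachable.swap⟩

/-- A walk from `z` to `x` survives any change of the arcs that lie on no such walk. -/
lemma Reachable.of_agree (hzx : Reachable t h A z x)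
    (hagree : ∀ a ∈ A, Reachable t h A z (t a) → Reachable t h A (h a) x →
      t' a = t a ∧ h' a = h a) :
    Reachable t' h' A z x := by
  induction hzx with
  | refl => exact .refl
  | tail hzy hstep ih =>
    obtain ⟨a, ha, rfl, rfl⟩ := hstep
    obtain ⟨ht, hh⟩ := hagree a ha hzy .refl
    exact (ih fun b hb hzb hby => hagree b hb hzb (hby.tail ⟨a, ha, rfl, rfl⟩)).tail
      ⟨a, ha, ht, hh⟩

end Digraph

section Cuts

omit [Fintype V] [Fintype α] [DecidableEq α]

variable {t h : α → V} {A : Finset α}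

lemma Reachable.inDeg_pos {x y : V} {X : Finset V} (hyx : Reachable t h A y x) (hy : y ∉ X)
    (hx : x ∈ X) : 0 < inDeg t h A X := by
  by_contra! h0
  have hclosed : ∀ a ∈ A, t a ∉ X → h a ∉ X := by
    simpa [inDeg, filter_eq_empty_iff] using h0
  suffices x ∉ X from this hx
  clear hx
  induction hyx with
  | refl => exact hy
  | tail _ hstep ih =>
    obtain ⟨a, ha, rfl, rfl⟩ := hstep
    exact hclosed a ha ih

variable [Fintype V]

lemma le_lam_iff [Nontrivial V] {k : ℕ} :
    k ≤ lam t h A ↔ ∀ X : Finset V, X.Nonempty → X ≠ univ → k ≤ inDeg t h A X := by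
  obtain ⟨v⟩ := (inferInstance : Nonempty V)
  have hne : {n | ∃ X : Finset V, X.Nonempty ∧ X ≠ univ ∧ inDeg t h A X = n}.Nonempty :=
    ⟨_, {v}, singleton_nonempty v, singleton_ne_univ v, rfl⟩
  rw [lam, le_csInf_iff (OrderBot.bddBelow _) hne]
  simp only [Set.mem_ofPred_eq, forall_exists_index, and_imp]
  exact ⟨fun H X hX hXu => H _ X hX hXu rfl, fun H _ X hX hXu hn => hn ▸ H X hX hXu⟩

lemma inDeg_compl (X : Finset V) : inDeg t h A Xᶜ = outDeg t h A X := by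
  simp only [inDeg, outDeg, mem_compl, not_not]

end Cuts

section Component

omit [DecidableEq V] [Fintype α] [DecidableEq α]

variable {t h t' h' : α → V} {A : Finset α} {v x : V}

lemma mem_component : x ∈ component t h A v ↔ Reachable t h A v x ∧ Reachable t h A x v := by
  simp [component]

lemma self_mem_component : v ∈ component t h A v :=
  mem_component.2 ⟨.refl, .refl⟩

lemma component_subset_of_agree
    (hagree : ∀ a ∈ A, t a ∈ component t h A v → h a ∈ component t h A v →
      t' a = t a ∧ h' a = h a) :
    component t h A v ⊆ component t' h' A v := by
  intro x hx
  obtain ⟨hvx, hxv⟩ := mem_component.1 hx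
  have harc : ∀ a ∈ A, Reachable t h A v (t a) → Reachable t h A (h a) v →
      t' a = t a ∧ h' a = h a := fun a ha hva hav =>
    hagree a ha (mem_component.2 ⟨hva, (reachable_arc ha).trans hav⟩)
      (mem_component.2 ⟨hva.trans (reachable_arc ha), hav⟩)
  refine mem_component.2 ⟨hvx.of_agree fun a ha hva hax => harc a ha hva (hax.trans hxv), ?_⟩
  exact (hxv.swap.of_agree fun a ha hva hax => (harc a ha (hvx.trans hax.swap) hva.swap).symm).swap

end Component

section Orientation

omit [Fintype V] [DecidableEq V] [Fintype α] [DecidableEq α]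

variable (e₁ e₂ : α → V) {σ σ' : α → Bool} {a : α}

lemma oT_oH_congr (h : σ' a = σ a) :
    oT e₁ e₂ σ' a = oT e₁ e₂ σ a ∧ oH e₁ e₂ σ' a = oH e₁ e₂ σ a := by
  simp [oT, oH, h]

lemma oT_update_not [DecidableEq α] : oT e₁ e₂ (update σ a (!σ a)) a = oH e₁ e₂ σ a := by
  cases hσ : σ a <;> simp [oT, oH, hσ]

lemma oH_update_not [DecidableEq α] : oH e₁ e₂ (update σ a (!σ a)) a = oT e₁ e₂ σ a := by
  cases hσ : σ a <;> simp [oT, oH, hσ]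

lemma oT_mem_and_oH_mem_iff {K : Finset V} :
    oT e₁ e₂ σ a ∈ K ∧ oH e₁ e₂ σ a ∈ K ↔ e₁ a ∈ K ∧ e₂ a ∈ K := by
  cases hσ : σ a <;> simp [oT, oH, hσ, and_comm]

lemma edgeCut_eq_outDeg_add_inDeg [DecidableEq V] (σ : α → Bool) (A : Finset α) (X : Finset V) :
    edgeCut e₁ e₂ A X =
      outDeg (oT e₁ e₂ σ) (oH e₁ e₂ σ) A X + inDeg (oT e₁ e₂ σ) (oH e₁ e₂ σ) A X := by
  classical
  have hcross : ∀ a, (e₁ a ∈ X ∧ e₂ a ∉ X) ∨ (e₁ a ∉ X ∧ e₂ a ∈ X) ↔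
      (oT e₁ e₂ σ a ∈ X ∧ oH e₁ e₂ σ a ∉ X) ∨ (oT e₁ e₂ σ a ∉ X ∧ oH e₁ e₂ σ a ∈ X) := by
    intro a
    cases hσ : σ a <;> simp [oT, oH, hσ, or_comm, and_comm]
  rw [edgeCut, outDeg, inDeg, filter_congr fun a _ => hcross a, filter_or]
  exact card_union_of_disjoint (disjoint_filter.2 fun _ _ hout hin => hin.1 hout.1)

lemma exists_leaving_of_edgeCut_pos [DecidableEq V] {A : Finset α} {X : Finset V}
    (hX : 0 < edgeCut e₁ e₂ A X) :
    ∃ a ∈ A, ∃ b : Bool, oT e₁ e₂ (fun _ => b) a ∈ X ∧ oH e₁ e₂ (fun _ => b) a ∉ X := by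
  obtain ⟨a, ha⟩ := card_pos.1 hX
  obtain ⟨haA, hcross⟩ := mem_filter.1 ha
  rcases hcross with hcross | hcross
  · exact ⟨a, haA, true, hcross⟩
  · exact ⟨a, haA, false, hcross.symm⟩

lemma edgeCut_le_edgeCut_erase_add_one [DecidableEq V] [DecidableEq α] (A : Finset α)
    (X : Finset V) (e : α) : edgeCut e₁ e₂ A X ≤ edgeCut e₁ e₂ (A.erase e) X + 1 := by
  rw [edgeCut, edgeCut, filter_erase]
  exact Nat.le_add_of_sub_le pred_card_le_card_erase

end Orientation

section Robbins

variable (e₁ e₂ : α → V) (E : Finset α)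

open Classical in
lemma exists_orientation_reachable_of_edgeCut_pos (K : Finset V) (z : V) (σ₀ : α → Bool)
    (hcut : ∀ X : Finset V, z ∈ X → Disjoint X K → 0 < edgeCut e₁ e₂ E X) :
    ∃ σ : α → Bool, (∀ a, e₁ a ∈ K → e₂ a ∈ K → σ a = σ₀ a) ∧
      ∃ s ∈ K, Reachable (oT e₁ e₂ σ) (oH e₁ e₂ σ) E z s := by
  set F := univ.filter fun σ : α → Bool => ∀ a, e₁ a ∈ K → e₂ a ∈ K → σ a = σ₀ a
  let R (σ : α → Bool) : Finset V := univ.filter (Reachable (oT e₁ e₂ σ) (oH e₁ e₂ σ) E z)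
  have mem_R {σ x} : x ∈ R σ ↔ Reachable (oT e₁ e₂ σ) (oH e₁ e₂ σ) E z x := by simp [R]
  obtain ⟨σ, hσF, hmax⟩ := exists_max_image F (fun σ => (R σ).card) ⟨σ₀, by simp [F]⟩
  have hσK : ∀ a, e₁ a ∈ K → e₂ a ∈ K → σ a = σ₀ a := (mem_filter.1 hσF).2
  refine ⟨σ, hσK, ?_⟩
  by_contra! hunreach
  have hRK : Disjoint (R σ) K := disjoint_left.2 fun s hs hsK => hunreach s hsK (mem_R.1 hs)
  have hout : outDeg (oT e₁ e₂ σ) (oH e₁ e₂ σ) E (R σ) = 0 := by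
    refine card_eq_zero.2 (filter_eq_empty_iff.2 fun a ha ⟨hta, hha⟩ => hha ?_)
    exact mem_R.2 ((mem_R.1 hta).tail ⟨a, ha, rfl, rfl⟩)
  have hin := hcut (R σ) (mem_R.2 .refl) hRK
  rw [edgeCut_eq_outDeg_add_inDeg e₁ e₂ σ, hout, zero_add, inDeg, card_pos] at hin
  obtain ⟨a, ha⟩ := hin
  obtain ⟨haE, hta, hha⟩ := mem_filter.1 ha
  set σ' := update σ a (!σ a)
  have hσ'F : σ' ∈ F := by
    refine mem_filter.2 ⟨mem_univ _, fun b hb₁ hb₂ => ?_⟩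
    rcases eq_or_ne b a with rfl | hba
    · exact absurd ((oT_mem_and_oH_mem_iff e₁ e₂).2 ⟨hb₁, hb₂⟩).2 (disjoint_left.1 hRK hha)
    · exact (update_of_ne hba _ _).trans (hσK b hb₁ hb₂)
  have hsub : R σ ⊆ R σ' := fun x hx => mem_R.2 <| (mem_R.1 hx).of_agree fun b _ hzb _ =>
    oT_oH_congr e₁ e₂ (update_of_ne (by rintro rfl; exact hta (mem_R.2 hzb)) _ _)
  have hnew : oT e₁ e₂ σ a ∈ R σ' := by
    have hza : Reachable (oT e₁ e₂ σ') (oH e₁ e₂ σ') E z (oT e₁ e₂ σ' a) := by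
      rw [oT_update_not]
      exact mem_R.1 (hsub hha)
    rw [mem_R, ← oH_update_not]
    exact hza.tail ⟨a, haE, rfl, rfl⟩
  exact (hmax σ' hσ'F).not_gt (card_lt_card ⟨hsub, fun h => hta (h hnew)⟩)

lemma exists_component_ssubset
    (h2ec : ∀ X : Finset V, X.Nonempty → X ≠ univ → 2 ≤ edgeCut e₁ e₂ E X)
    (σ : α → Bool) (v : V) (hK : component (oT e₁ e₂ σ) (oH e₁ e₂ σ) E v ≠ univ) :
    ∃ σ' : α → Bool, component (oT e₁ e₂ σ) (oH e₁ e₂ σ) E v ⊂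
      component (oT e₁ e₂ σ') (oH e₁ e₂ σ') E v := by
  set K := component (oT e₁ e₂ σ) (oH e₁ e₂ σ) E v
  have hvK : v ∈ K := self_mem_component
  have hKcut : 0 < edgeCut e₁ e₂ E K := by
    have := h2ec K ⟨v, hvK⟩ hK
    omega
  -- `e₀` oriented by `b` leaves `K`
  obtain ⟨e₀, he₀E, b, hu, hz⟩ := exists_leaving_of_edgeCut_pos e₁ e₂ hKcut
  set z := oH e₁ e₂ (fun _ => b) e₀
  have hcut : ∀ X : Finset V, z ∈ X → Disjoint X K → 0 < edgeCut e₁ e₂ (E.erase e₀) X := by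
    intro X hzX hXK
    have h2 := h2ec X ⟨z, hzX⟩ fun hX => disjoint_left.1 hXK (hX ▸ mem_univ v) hvK
    have := edgeCut_le_edgeCut_erase_add_one e₁ e₂ E X e₀
    omega
  obtain ⟨σ₁, hσ₁K, s, hsK, hzs⟩ :=
    exists_orientation_reachable_of_edgeCut_pos e₁ e₂ (E.erase e₀) K z σ hcut
  set σ₂ := update σ₁ e₀ b
  have he₀ : oT e₁ e₂ σ₂ e₀ = oT e₁ e₂ (fun _ => b) e₀ ∧ oH e₁ e₂ σ₂ e₀ = z :=
    oT_oH_congr e₁ e₂ (update_self e₀ b σ₁)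
  have hKsub : K ⊆ component (oT e₁ e₂ σ₂) (oH e₁ e₂ σ₂) E v :=
    component_subset_of_agree fun a _ hta hha => by
      obtain ⟨ha₁, ha₂⟩ := (oT_mem_and_oH_mem_iff e₁ e₂).1 ⟨hta, hha⟩
      have hae : a ≠ e₀ := by
        rintro rfl
        exact hz ((oT_mem_and_oH_mem_iff e₁ e₂).2 ⟨ha₁, ha₂⟩).2
      exact oT_oH_congr e₁ e₂ ((update_of_ne hae _ _).trans (hσ₁K a ha₁ ha₂))
  have hzK₂ : z ∈ component (oT e₁ e₂ σ₂) (oH e₁ e₂ σ₂) E v := by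
    have hvu := (mem_component.1 (hKsub hu)).1
    have hsv := (mem_component.1 (hKsub hsK)).2
    have hzs₂ : Reachable (oT e₁ e₂ σ₂) (oH e₁ e₂ σ₂) (E.erase e₀) z s :=
      hzs.of_agree fun a ha _ _ => oT_oH_congr e₁ e₂ (update_of_ne (ne_of_mem_erase ha) _ _)
    exact mem_component.2 ⟨hvu.tail ⟨e₀, he₀E, he₀⟩, (hzs₂.mono (erase_subset _ _)).trans hsv⟩
  exact ⟨σ₂, (ssubset_iff_of_subset hKsub).2 ⟨z, hzK₂, hz⟩⟩

theorem exists_strongly_connected_orientation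
    (h2ec : ∀ X : Finset V, X.Nonempty → X ≠ univ → 2 ≤ edgeCut e₁ e₂ E X) :
    ∃ σ : α → Bool, ∀ x y, Reachable (oT e₁ e₂ σ) (oH e₁ e₂ σ) E x y := by
  rcases isEmpty_or_nonempty V with hV | ⟨⟨v⟩⟩
  · exact ⟨fun _ => true, fun x => isEmptyElim x⟩
  obtain ⟨σ, -, hmax⟩ :=
    exists_max_image univ (fun σ => (component (oT e₁ e₂ σ) (oH e₁ e₂ σ) E v).card) univ_nonempty
  have hK : component (oT e₁ e₂ σ) (oH e₁ e₂ σ) E v = univ := by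
    by_contra hK
    obtain ⟨σ', hlt⟩ := exists_component_ssubset e₁ e₂ E h2ec σ v hK
    exact (hmax σ' (mem_univ _)).not_gt (card_lt_card hlt)
  refine ⟨σ, fun x y => ?_⟩
  exact (mem_component.1 (hK ▸ mem_univ x)).2.trans (mem_component.1 (hK ▸ mem_univ y)).1

end Robbins

/-- Robbins: a multigraph has a strongly connected orientation iff it is 2-edge-connected. -/
theorem stmt10 (e₁ e₂ : α → V) (E : Finset α) (hV : 2 ≤ Fintype.card V) :
    (∃ σ : α → Bool, 1 ≤ lam (oT e₁ e₂ σ) (oH e₁ e₂ σ) E) ↔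
    (∀ X : Finset V, X.Nonempty → X ≠ Finset.univ → 2 ≤ edgeCut e₁ e₂ E X) := by
  have : Nontrivial V := Fintype.one_lt_card_iff_nontrivial.1 hV
  constructor
  · rintro ⟨σ, hσ⟩ X hX hXu
    have hXc : Xᶜ.Nonempty := (compl_ne_univ_iff_nonempty Xᶜ).1 (by rwa [compl_compl])
    have hin := le_lam_iff.1 hσ X hX hXu
    have hout := le_lam_iff.1 hσ Xᶜ hXc ((compl_ne_univ_iff_nonempty X).2 hX)
    rw [edgeCut_eq_outDeg_add_inDeg e₁ e₂ σ, ← inDeg_compl]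
    omega
  · intro h2ec
    obtain ⟨σ, hσ⟩ := exists_strongly_connected_orientation e₁ e₂ E h2ec
    refine ⟨σ, le_lam_iff.2 fun X ⟨x, hx⟩ hXu => ?_⟩
    obtain ⟨y, hy⟩ : ∃ y, y ∉ X := by
      by_contra! h
      exact hXu (eq_univ_iff_forall.2 h)
    exact (hσ y x).inDeg_pos hy hx
end

section
/- An undirected multigraph G admits a k-arc-connected orientation if and only if G is 2k-edge-connected. -/
open Finset
set_option linter.unusedSectionVars false

variable {V α : Type*} [Fintype V] [DecidableEq V] [Fintype α] [DecidableEq α]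

/-! ### Counting toolkit -/

/-- edges with one endpoint in `A` and the other in `B` (use with disjoint `A`, `B`). -/
def btwn (e₁ e₂ : α → V) (E : Finset α) (A B : Finset V) : ℕ :=
  (E.filter fun e => (e₁ e ∈ A ∧ e₂ e ∈ B) ∨ (e₁ e ∈ B ∧ e₂ e ∈ A)).card

/-- edges with one endpoint in `A` and the other outside `U` (use with `A ⊆ U`). -/
def btwnc (e₁ e₂ : α → V) (E : Finset α) (A U : Finset V) : ℕ :=
  (E.filter fun e => (e₁ e ∈ A ∧ e₂ e ∉ U) ∨ (e₂ e ∈ A ∧ e₁ e ∉ U)).card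

/-- edges from `s` into `X` (use with `s ∉ X`, no loops at `s`). -/
def sdeg (e₁ e₂ : α → V) (E : Finset α) (s : V) (X : Finset V) : ℕ :=
  (E.filter fun e => (e₁ e = s ∧ e₂ e ∈ X) ∨ (e₂ e = s ∧ e₁ e ∈ X)).card

variable (e₁ e₂ : α → V) (E : Finset α)

lemma cut_submod (A B : Finset V) :
    edgeCut e₁ e₂ E A + edgeCut e₁ e₂ E B =
      edgeCut e₁ e₂ E (A ∪ B) + edgeCut e₁ e₂ E (A ∩ B) +
        2 * btwn e₁ e₂ E (A \ B) (B \ A) := by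
  simp only [edgeCut, btwn, Finset.card_filter, Finset.mul_sum, ← Finset.sum_add_distrib]
  refine Finset.sum_congr rfl fun e _ => ?_
  by_cases h1 : e₁ e ∈ A <;> by_cases h2 : e₂ e ∈ A <;>
    by_cases h3 : e₁ e ∈ B <;> by_cases h4 : e₂ e ∈ B <;>
    simp [h1, h2, h3, h4]

lemma cut_posimod (A B : Finset V) :
    edgeCut e₁ e₂ E A + edgeCut e₁ e₂ E B =
      edgeCut e₁ e₂ E (A \ B) + edgeCut e₁ e₂ E (B \ A) +
        2 * btwnc e₁ e₂ E (A ∩ B) (A ∪ B) := by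
  simp only [edgeCut, btwnc, Finset.card_filter, Finset.mul_sum, ← Finset.sum_add_distrib]
  refine Finset.sum_congr rfl fun e _ => ?_
  by_cases h1 : e₁ e ∈ A <;> by_cases h2 : e₂ e ∈ A <;>
    by_cases h3 : e₁ e ∈ B <;> by_cases h4 : e₂ e ∈ B <;>
    simp [h1, h2, h3, h4]

lemma cut_union_disjoint {A B : Finset V} (h : Disjoint A B) :
    edgeCut e₁ e₂ E (A ∪ B) + 2 * btwn e₁ e₂ E A B =
      edgeCut e₁ e₂ E A + edgeCut e₁ e₂ E B := by
  have hd : ∀ x, x ∈ A → x ∈ B → False := fun x hx hy =>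
    (Finset.disjoint_left.1 h) hx hy
  simp only [edgeCut, btwn, Finset.card_filter, Finset.mul_sum, ← Finset.sum_add_distrib]
  refine Finset.sum_congr rfl fun e _ => ?_
  by_cases h1 : e₁ e ∈ A <;> by_cases h2 : e₂ e ∈ A <;>
    by_cases h3 : e₁ e ∈ B <;> by_cases h4 : e₂ e ∈ B
  all_goals first
  | exact (hd _ h1 h3).elim
  | exact (hd _ h2 h4).elim
  | simp [h1, h2, h3, h4]

lemma sdeg_modular (s : V) (A B : Finset V) :
    sdeg e₁ e₂ E s A + sdeg e₁ e₂ E s B =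
      sdeg e₁ e₂ E s (A ∪ B) + sdeg e₁ e₂ E s (A ∩ B) := by
  simp only [sdeg, Finset.card_filter, ← Finset.sum_add_distrib]
  refine Finset.sum_congr rfl fun e _ => ?_
  by_cases h0 : e₁ e = s <;> by_cases h0' : e₂ e = s <;>
    by_cases h1 : e₁ e ∈ A <;> by_cases h2 : e₂ e ∈ A <;>
    by_cases h3 : e₁ e ∈ B <;> by_cases h4 : e₂ e ∈ B <;>
    by_cases hA : s ∈ A <;> by_cases hB : s ∈ B <;>
    simp [h0, h0', h1, h2, h3, h4, hA, hB]
/-! ### more toolkit -/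

/-- `e` is a non-loop edge at `s`. -/
def isS (e₁ e₂ : α → V) (s : V) (e : α) : Prop :=
  (e₁ e = s ∧ e₂ e ≠ s) ∨ (e₁ e ≠ s ∧ e₂ e = s)

instance (s : V) (e : α) : Decidable (isS e₁ e₂ s e) := by unfold isS; infer_instance

/-- other endpoint of an edge at `s`. -/
def oe (e₁ e₂ : α → V) (s : V) (e : α) : V := if e₁ e = s then e₂ e else e₁ e

lemma cut_singleton (s : V) :
    edgeCut e₁ e₂ E {s} = (E.filter (isS e₁ e₂ s)).card := by
  unfold edgeCut
  apply Finset.card_nbij' id id <;> simp [isS] <;> tauto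

lemma cut_partition {S : Finset V} {s : V} {X : Finset V}
    (hend : ∀ e ∈ E, e₁ e ∈ S ∧ e₂ e ∈ S)
    (hnl : ∀ e ∈ E, ¬(e₁ e = s ∧ e₂ e = s))
    (hX : X ⊆ S.erase s) :
    edgeCut e₁ e₂ E X + edgeCut e₁ e₂ E {s} =
      edgeCut e₁ e₂ E ((S.erase s) \ X) + 2 * sdeg e₁ e₂ E s X := by
  have hX' : ∀ x ∈ X, x ∈ S ∧ x ≠ s := by
    intro x hx
    have := hX hx
    rw [Finset.mem_erase] at this
    exact ⟨this.2, this.1⟩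
  have hsX : s ∉ X := fun h => (hX' s h).2 rfl
  simp only [edgeCut, sdeg, Finset.card_filter, Finset.mul_sum, ← Finset.sum_add_distrib]
  refine Finset.sum_congr rfl fun e he => ?_
  obtain ⟨hS1, hS2⟩ := hend e he
  have hnl' := hnl e he
  by_cases h1 : e₁ e = s <;> by_cases h2 : e₂ e = s <;>
    by_cases h3 : e₁ e ∈ X <;> by_cases h4 : e₂ e ∈ X
  all_goals first
  | exact (hnl' ⟨h1, h2⟩).elim
  | exact ((hX' _ h3).2 h1).elim
  | exact ((hX' _ h4).2 h2).elim
  | (simp [h1, h2, h3, h4, Finset.mem_sdiff, Finset.mem_erase, hS1, hS2, hsX])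

lemma sdeg_eq_deg {s : V} {U : Finset V}
    (hnl : ∀ e ∈ E, ¬(e₁ e = s ∧ e₂ e = s))
    (hcov : ∀ e ∈ E, isS e₁ e₂ s e → oe e₁ e₂ s e ∈ U) :
    sdeg e₁ e₂ E s U = edgeCut e₁ e₂ E {s} := by
  simp only [sdeg, edgeCut, Finset.card_filter]
  refine Finset.sum_congr rfl fun e he => ?_
  have hnl' := hnl e he
  have hcov' := hcov e he
  by_cases h1 : e₁ e = s <;> by_cases h2 : e₂ e = s
  · exact (hnl' ⟨h1, h2⟩).elim
  · have := hcov' (Or.inl ⟨h1, h2⟩)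
    simp [isS, oe, h1, h2] at this ⊢
    simp [this]
  · have := hcov' (Or.inr ⟨h1, h2⟩)
    simp [isS, oe, h1, h2] at this ⊢
    simp [this]
  · simp [h1, h2]

lemma one_le_sdeg {s : V} {X : Finset V} {a : α} (ha : a ∈ E)
    (hsa : isS e₁ e₂ s a) (hoe : oe e₁ e₂ s a ∈ X) :
    1 ≤ sdeg e₁ e₂ E s X := by
  rw [sdeg, ← Finset.card_singleton a]
  apply Finset.card_le_card
  intro x hx
  rw [Finset.mem_singleton] at hx
  subst hx
  rw [Finset.mem_filter]
  rcases hsa with ⟨h1, h2⟩ | ⟨h1, h2⟩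
  · rw [oe, if_pos h1] at hoe
    exact ⟨ha, Or.inl ⟨h1, hoe⟩⟩
  · rw [oe, if_neg h1] at hoe
    exact ⟨ha, Or.inr ⟨h2, hoe⟩⟩

lemma one_le_btwnc {A U : Finset V} {a : α} (ha : a ∈ E)
    (h1 : e₂ a ∈ A) (h2 : e₁ a ∉ U) :
    1 ≤ btwnc e₁ e₂ E A U := by
  rw [btwnc, ← Finset.card_singleton a]
  apply Finset.card_le_card
  intro x hx
  rw [Finset.mem_singleton] at hx
  subst hx
  exact Finset.mem_filter.2 ⟨ha, Or.inr ⟨h1, h2⟩⟩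

lemma one_le_btwnc' {A U : Finset V} {a : α} (ha : a ∈ E)
    (h1 : e₁ a ∈ A) (h2 : e₂ a ∉ U) :
    1 ≤ btwnc e₁ e₂ E A U := by
  rw [btwnc, ← Finset.card_singleton a]
  apply Finset.card_le_card
  intro x hx
  rw [Finset.mem_singleton] at hx
  subst hx
  exact Finset.mem_filter.2 ⟨ha, Or.inl ⟨h1, h2⟩⟩

/-- number of non-loop edges with both endpoints in `T`. -/
def inside (e₁ e₂ : α → V) (E : Finset α) (T : Finset V) : ℕ :=
  (E.filter fun e => e₁ e ∈ T ∧ e₂ e ∈ T ∧ e₁ e ≠ e₂ e).card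

lemma sum_cut_singletons (T : Finset V) :
    ∑ v ∈ T, edgeCut e₁ e₂ E {v} = 2 * inside e₁ e₂ E T + edgeCut e₁ e₂ E T := by
  simp only [edgeCut, inside, Finset.card_filter, Finset.mul_sum, ← Finset.sum_add_distrib]
  rw [Finset.sum_comm]
  refine Finset.sum_congr rfl fun e he => ?_
  by_cases hl : e₁ e = e₂ e
  · have hz : ∀ v ∈ T, (if (e₁ e ∈ ({v} : Finset V) ∧ e₂ e ∉ ({v} : Finset V)) ∨
        (e₁ e ∉ ({v} : Finset V) ∧ e₂ e ∈ ({v} : Finset V)) then 1 else 0) = 0 := by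
      intro v _
      simp [hl]
    rw [Finset.sum_congr rfl hz, Finset.sum_const_zero]
    simp [hl]
  · have hv : ∀ v ∈ T, (if (e₁ e ∈ ({v} : Finset V) ∧ e₂ e ∉ ({v} : Finset V)) ∨
        (e₁ e ∉ ({v} : Finset V) ∧ e₂ e ∈ ({v} : Finset V)) then 1 else 0) =
        (if e₁ e = v then 1 else 0) + (if e₂ e = v then 1 else 0) := by
      intro v _
      by_cases hv1 : e₁ e = v <;> by_cases hv2 : e₂ e = v
      · exact absurd (hv1.trans hv2.symm) hl
      · simp [Finset.mem_singleton, hv1, hv2]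
      · simp [Finset.mem_singleton, hv1, hv2]
      · simp [Finset.mem_singleton, hv1, hv2]
    rw [Finset.sum_congr rfl hv, Finset.sum_add_distrib,
      Finset.sum_ite_eq T (e₁ e), Finset.sum_ite_eq T (e₂ e)]
    by_cases h3 : e₁ e ∈ T <;> by_cases h4 : e₂ e ∈ T <;> simp [h3, h4, hl]

lemma cut_compl {S X : Finset V} (hend : ∀ e ∈ E, e₁ e ∈ S ∧ e₂ e ∈ S) (hX : X ⊆ S) :
    edgeCut e₁ e₂ E X = edgeCut e₁ e₂ E (S \ X) := by
  unfold edgeCut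
  refine congrArg _ (Finset.filter_congr fun e he => ?_)
  obtain ⟨hS1, hS2⟩ := hend e he
  simp only [Finset.mem_sdiff, hS1, hS2, true_and]
  tauto

lemma inDeg_add_compl (σ : α → Bool) (X : Finset V) :
    inDeg (oT e₁ e₂ σ) (oH e₁ e₂ σ) E X + inDeg (oT e₁ e₂ σ) (oH e₁ e₂ σ) E Xᶜ =
      edgeCut e₁ e₂ E X := by
  simp only [inDeg, edgeCut, Finset.card_filter, ← Finset.sum_add_distrib]
  refine Finset.sum_congr rfl fun e he => ?_
  by_cases hσ : σ e <;>
    by_cases h1 : e₁ e ∈ X <;> by_cases h2 : e₂ e ∈ X <;>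
    simp [oT, oH, hσ, h1, h2]

lemma inDeg_mono_erase (T H : α → V) (a : α) (X : Finset V) :
    inDeg T H (E.erase a) X ≤ inDeg T H E X :=
  Finset.card_le_card (Finset.filter_subset_filter _ (Finset.erase_subset a E))

/-! ### merge (splitting-off) counting -/

section Merge

variable {s t u : V} {a b : α}

lemma sum_split_ab (haE : a ∈ E) (hbE : b ∈ E) (hne : a ≠ b) (g : α → ℕ) :
    ∑ e ∈ E, g e = ∑ e ∈ (E.erase b).erase a, g e + g a + g b := by
  have hab : a ∈ E.erase b := Finset.mem_erase.2 ⟨hne, haE⟩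
  rw [← Finset.sum_erase_add E g hbE, ← Finset.sum_erase_add (E.erase b) g hab]

lemma sum_split_a (haE : a ∈ E) (hbE : b ∈ E) (hne : a ≠ b) (g : α → ℕ) :
    ∑ e ∈ E.erase b, g e = ∑ e ∈ (E.erase b).erase a, g e + g a := by
  have hab : a ∈ E.erase b := Finset.mem_erase.2 ⟨hne, haE⟩
  rw [← Finset.sum_erase_add (E.erase b) g hab]

lemma merge_cut (haE : a ∈ E) (hbE : b ∈ E) (hne : a ≠ b)
    (hea : (e₁ a = s ∧ e₂ a = t) ∨ (e₁ a = t ∧ e₂ a = s))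
    (heb : (e₁ b = s ∧ e₂ b = u) ∨ (e₁ b = u ∧ e₂ b = s))
    {X : Finset V} (hsX : s ∉ X) :
    edgeCut (Function.update e₁ a t) (Function.update e₂ a u) (E.erase b) X
      + 2 * (if t ∈ X ∧ u ∈ X then 1 else 0) = edgeCut e₁ e₂ E X := by
  simp only [edgeCut, Finset.card_filter]
  rw [sum_split_ab E haE hbE hne, sum_split_a E haE hbE hne]
  have hcong : ∀ e ∈ (E.erase b).erase a,
      (if (Function.update e₁ a t e ∈ X ∧ Function.update e₂ a u e ∉ X) ∨
          (Function.update e₁ a t e ∉ X ∧ Function.update e₂ a u e ∈ X) then 1 else 0) =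
      (if (e₁ e ∈ X ∧ e₂ e ∉ X) ∨ (e₁ e ∉ X ∧ e₂ e ∈ X) then 1 else 0) := by
    intro e he
    have hea' : e ≠ a := (Finset.mem_erase.1 he).1
    rw [Function.update_of_ne hea', Function.update_of_ne hea']
  rw [Finset.sum_congr rfl hcong]
  have h1 : Function.update e₁ a t a = t := Function.update_self a t e₁
  have h2 : Function.update e₂ a u a = u := Function.update_self a u e₂
  rw [h1, h2]
  have htX : ∀ w : V, w = s → w ∉ X := fun w hw => hw ▸ hsX
  rcases hea with ⟨ha1, ha2⟩ | ⟨ha1, ha2⟩ <;> rcases heb with ⟨hb1, hb2⟩ | ⟨hb1, hb2⟩ <;>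
    rw [ha1, ha2, hb1, hb2] <;>
    by_cases h3 : t ∈ X <;> by_cases h4 : u ∈ X <;>
    simp [h3, h4, hsX] <;> omega

lemma merge_deg (haE : a ∈ E) (hbE : b ∈ E) (hne : a ≠ b)
    (hea : (e₁ a = s ∧ e₂ a = t) ∨ (e₁ a = t ∧ e₂ a = s))
    (heb : (e₁ b = s ∧ e₂ b = u) ∨ (e₁ b = u ∧ e₂ b = s))
    (hts : t ≠ s) (hus : u ≠ s) :
    edgeCut (Function.update e₁ a t) (Function.update e₂ a u) (E.erase b) {s} + 2
      = edgeCut e₁ e₂ E {s} := by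
  simp only [edgeCut, Finset.card_filter]
  rw [sum_split_ab E haE hbE hne, sum_split_a E haE hbE hne]
  have hcong : ∀ e ∈ (E.erase b).erase a,
      (if (Function.update e₁ a t e ∈ ({s} : Finset V) ∧ Function.update e₂ a u e ∉ ({s} : Finset V)) ∨
          (Function.update e₁ a t e ∉ ({s} : Finset V) ∧ Function.update e₂ a u e ∈ ({s} : Finset V)) then 1 else 0) =
      (if (e₁ e ∈ ({s} : Finset V) ∧ e₂ e ∉ ({s} : Finset V)) ∨
          (e₁ e ∉ ({s} : Finset V) ∧ e₂ e ∈ ({s} : Finset V)) then 1 else 0) := by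
    intro e he
    have hea' : e ≠ a := (Finset.mem_erase.1 he).1
    rw [Function.update_of_ne hea', Function.update_of_ne hea']
  rw [Finset.sum_congr rfl hcong]
  rw [Function.update_self a t e₁, Function.update_self a u e₂]
  rcases hea with ⟨ha1, ha2⟩ | ⟨ha1, ha2⟩ <;> rcases heb with ⟨hb1, hb2⟩ | ⟨hb1, hb2⟩ <;>
    rw [ha1, ha2, hb1, hb2] <;>
    simp [Finset.mem_singleton, hts, hus] <;> omega

end Merge

/-! ### lifting one split -/

section Lift

variable {s t u : V} {a b : α}

lemma lift_inDeg (haE : a ∈ E) (hbE : b ∈ E) (hne : a ≠ b)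
    (hea : (e₁ a = s ∧ e₂ a = t) ∨ (e₁ a = t ∧ e₂ a = s))
    (heb : (e₁ b = s ∧ e₂ b = u) ∨ (e₁ b = u ∧ e₂ b = s))
    (hts : t ≠ s) (hus : u ≠ s) (σ₁ : α → Bool) (X : Finset V) :
    inDeg (oT (Function.update e₁ a t) (Function.update e₂ a u) σ₁)
        (oH (Function.update e₁ a t) (Function.update e₂ a u) σ₁) (E.erase b) X
      + (if s ∈ X ∧ t ∉ X ∧ u ∉ X then 1 else 0)
      + (if s ∉ X ∧ t ∈ X ∧ u ∈ X then 1 else 0)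
      ≤ inDeg (oT e₁ e₂ (fun x => if x = a then (if σ₁ a then decide (e₂ a = s) else decide (e₂ a = t))
          else if x = b then (if σ₁ a then decide (e₂ b = u) else decide (e₂ b = s)) else σ₁ x))
        (oH e₁ e₂ (fun x => if x = a then (if σ₁ a then decide (e₂ a = s) else decide (e₂ a = t))
          else if x = b then (if σ₁ a then decide (e₂ b = u) else decide (e₂ b = s)) else σ₁ x)) E X := by
  set σ : α → Bool := fun x => if x = a then (if σ₁ a then decide (e₂ a = s) else decide (e₂ a = t))
          else if x = b then (if σ₁ a then decide (e₂ b = u) else decide (e₂ b = s)) else σ₁ x with hσ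
  simp only [inDeg, Finset.card_filter]
  rw [sum_split_ab E haE hbE hne, sum_split_a E haE hbE hne]
  have hcong : ∀ e ∈ (E.erase b).erase a,
      (if oT (Function.update e₁ a t) (Function.update e₂ a u) σ₁ e ∉ X ∧
          oH (Function.update e₁ a t) (Function.update e₂ a u) σ₁ e ∈ X then 1 else 0) =
      (if oT e₁ e₂ σ e ∉ X ∧ oH e₁ e₂ σ e ∈ X then (1:ℕ) else 0) := by
    intro e he
    have hea' : e ≠ a := (Finset.mem_erase.1 he).1
    have heb' : e ≠ b := (Finset.mem_erase.1 (Finset.mem_of_mem_erase he)).1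
    simp only [oT, oH, hσ, if_neg hea', if_neg heb', Function.update_of_ne hea']
  rw [Finset.sum_congr rfl hcong]
  have hσa : σ a = (if σ₁ a then decide (e₂ a = s) else decide (e₂ a = t)) := by simp [hσ]
  have hσb : σ b = (if σ₁ a then decide (e₂ b = u) else decide (e₂ b = s)) := by
    simp [hσ, if_neg (Ne.symm hne), hne.symm]
  have hfa1 : Function.update e₁ a t a = t := Function.update_self a t e₁
  have hfa2 : Function.update e₂ a u a = u := Function.update_self a u e₂
  simp only [oT, oH, hσa, hσb, hfa1, hfa2]
  have hst : s ≠ t := Ne.symm hts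
  have hsu : s ≠ u := Ne.symm hus
  cases hσ1 : σ₁ a <;>
    rcases hea with ⟨ha1, ha2⟩ | ⟨ha1, ha2⟩ <;> rcases heb with ⟨hb1, hb2⟩ | ⟨hb1, hb2⟩ <;>
    simp only [ha1, ha2, hb1, hb2] <;>
    by_cases h3 : t ∈ X <;> by_cases h4 : u ∈ X <;> by_cases h5 : s ∈ X <;>
    simp [h3, h4, h5, hts, hus, hst, hsu, hσ1]

end Lift

/-! ### a tight singleton exists in a minimally 2k-edge-connected graph -/

lemma cut_erase {a : α} (haE : a ∈ E) (X : Finset V) :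
    edgeCut e₁ e₂ E X = edgeCut e₁ e₂ (E.erase a) X +
      (if (e₁ a ∈ X ∧ e₂ a ∉ X) ∨ (e₁ a ∉ X ∧ e₂ a ∈ X) then 1 else 0) := by
  simp only [edgeCut, Finset.card_filter]
  rw [← Finset.sum_erase_add E _ haE]

lemma exists_tight_singleton {S : Finset V} {k : ℕ} (hk : 1 ≤ k) (hS3 : 3 ≤ S.card)
    (hend : ∀ e ∈ E, e₁ e ∈ S ∧ e₂ e ∈ S)
    (hcut : ∀ X : Finset V, X ⊆ S → X.Nonempty → X ≠ S → 2 * k ≤ edgeCut e₁ e₂ E X)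
    (htight : ∀ a ∈ E, ∃ X : Finset V, X ⊆ S ∧ X.Nonempty ∧ X ≠ S ∧
      edgeCut e₁ e₂ (E.erase a) X < 2 * k) :
    ∃ s ∈ S, edgeCut e₁ e₂ E {s} = 2 * k := by
  by_contra hno
  push_neg at hno
  -- every vertex cut is ≥ 2k+1
  have hsing : ∀ v ∈ S, 2 * k + 1 ≤ edgeCut e₁ e₂ E {v} := by
    intro v hv
    have h1 : {v} ⊆ S := Finset.singleton_subset_iff.2 hv
    have h2 : ({v} : Finset V) ≠ S := by
      intro h
      rw [← h] at hS3
      simp at hS3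
    have := hcut {v} h1 (Finset.singleton_nonempty v) h2
    have := hno v hv
    omega
  -- a tight set exists
  have hEx : ∃ a, a ∈ E := by
    obtain ⟨v, hv⟩ := Finset.card_pos.1 (by omega : 0 < S.card)
    have := hsing v hv
    have hpos : 0 < edgeCut e₁ e₂ E {v} := by omega
    obtain ⟨a, ha⟩ := Finset.card_pos.1 hpos
    exact ⟨a, (Finset.mem_filter.1 ha).1⟩
  -- the family of tight sets
  set F : Finset (Finset V) := S.powerset.filter
    (fun X => X.Nonempty ∧ X ≠ S ∧ edgeCut e₁ e₂ E X = 2 * k) with hF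
  have tight_of : ∀ a ∈ E, ∀ X : Finset V, X ⊆ S → X.Nonempty → X ≠ S →
      edgeCut e₁ e₂ (E.erase a) X < 2 * k → X ∈ F ∧
        ((e₁ a ∈ X ∧ e₂ a ∉ X) ∨ (e₁ a ∉ X ∧ e₂ a ∈ X)) := by
    intro a ha X hXS hXne hXS' hlt
    have hid := cut_erase e₁ e₂ E ha X
    have hge := hcut X hXS hXne hXS'
    by_cases hcr : (e₁ a ∈ X ∧ e₂ a ∉ X) ∨ (e₁ a ∉ X ∧ e₂ a ∈ X)
    · rw [if_pos hcr] at hid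
      refine ⟨Finset.mem_filter.2 ⟨Finset.mem_powerset.2 hXS, hXne, hXS', by omega⟩, hcr⟩
    · rw [if_neg hcr] at hid
      omega
  have hFne : F.Nonempty := by
    obtain ⟨a, ha⟩ := hEx
    obtain ⟨X, h1, h2, h3, h4⟩ := htight a ha
    exact ⟨X, (tight_of a ha X h1 h2 h3 h4).1⟩
  obtain ⟨T, hTF, hTmin⟩ := Finset.exists_min_image F Finset.card hFne
  have hTS : T ⊆ S := Finset.mem_powerset.1 (Finset.mem_filter.1 hTF).1
  obtain ⟨hTne, hTneS, hTcut⟩ := (Finset.mem_filter.1 hTF).2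
  -- T has at least 2 elements
  have hT2 : 2 ≤ T.card := by
    rcases Nat.lt_or_ge T.card 2 with h | h
    · interval_cases hc : T.card
      · exact absurd (Finset.card_eq_zero.1 hc) (Finset.nonempty_iff_ne_empty.1 hTne)
      · obtain ⟨v, hv⟩ := Finset.card_eq_one.1 hc
        have := hsing v (hTS (hv ▸ Finset.mem_singleton_self v))
        rw [hv] at hTcut
        omega
    · exact h
  -- an edge inside T
  have hsum : 2 * k + 2 ≤ ∑ v ∈ T, edgeCut e₁ e₂ E {v} := by
    calc 2 * k + 2 ≤ (2 * k + 1) * T.card := by nlinarith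
    _ = ∑ _v ∈ T, (2 * k + 1) := by rw [Finset.sum_const, smul_eq_mul, mul_comm]
    _ ≤ ∑ v ∈ T, edgeCut e₁ e₂ E {v} := Finset.sum_le_sum (fun v hv => hsing v (hTS hv))
  rw [sum_cut_singletons, hTcut] at hsum
  have hins : 0 < inside e₁ e₂ E T := by omega
  obtain ⟨g, hg⟩ := Finset.card_pos.1 hins
  rw [Finset.mem_filter] at hg
  obtain ⟨hgE, hg1, hg2, hg3⟩ := hg
  -- a tight set crossed by g, with e₁ g inside
  obtain ⟨X₀, hX1, hX2, hX3, hX4⟩ := htight g hgE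
  obtain ⟨hX0F, hX0cr⟩ := tight_of g hgE X₀ hX1 hX2 hX3 hX4
  have hX0cut : edgeCut e₁ e₂ E X₀ = 2 * k := (Finset.mem_filter.1 hX0F).2.2.2
  -- normalize so that e₁ g ∈ X, e₂ g ∉ X
  obtain ⟨X, hXS, hXne, hXneS, hXcut, hgx, hgy⟩ :
      ∃ X : Finset V, X ⊆ S ∧ X.Nonempty ∧ X ≠ S ∧ edgeCut e₁ e₂ E X = 2 * k ∧
        e₁ g ∈ X ∧ e₂ g ∉ X := by
    rcases hX0cr with ⟨h1, h2⟩ | ⟨h1, h2⟩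
    · exact ⟨X₀, hX1, hX2, hX3, hX0cut, h1, h2⟩
    · refine ⟨S \ X₀, Finset.sdiff_subset, ⟨e₁ g, Finset.mem_sdiff.2 ⟨(hend g hgE).1, h1⟩⟩,
        ?_, ?_, Finset.mem_sdiff.2 ⟨(hend g hgE).1, h1⟩, ?_⟩
      · intro h
        obtain ⟨z, hz⟩ := hX2
        have : z ∈ S \ X₀ := by rw [h]; exact hX1 hz
        exact (Finset.mem_sdiff.1 this).2 hz
      · rw [← cut_compl e₁ e₂ E hend hX1]
        exact hX0cut
      · intro h
        exact (Finset.mem_sdiff.1 h).2 h2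
  -- posimodularity
  have hpos := cut_posimod e₁ e₂ E T X
  rw [hTcut, hXcut] at hpos
  have hTX_ne : (T \ X).Nonempty := ⟨e₂ g, Finset.mem_sdiff.2 ⟨hg2, hgy⟩⟩
  have hTXS : T \ X ⊆ S := fun z hz => hTS (Finset.mem_sdiff.1 hz).1
  have hTXneS : T \ X ≠ S := by
    intro h
    have : e₁ g ∈ T \ X := by rw [h]; exact (hend g hgE).1
    exact (Finset.mem_sdiff.1 this).2 hgx
  have hTXcut : 2 * k ≤ edgeCut e₁ e₂ E (T \ X) := hcut _ hTXS hTX_ne hTXneS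
  have hTXssub : T \ X ⊂ T := by
    rw [Finset.ssubset_iff_subset_ne]
    refine ⟨Finset.sdiff_subset, fun h => ?_⟩
    have : e₁ g ∈ T \ X := by rw [h]; exact hg1
    exact (Finset.mem_sdiff.1 this).2 hgx
  by_cases hXT : (X \ T).Nonempty
  · -- X \ T nonempty: T \ X is a smaller tight set
    have hXTS : X \ T ⊆ S := fun z hz => hXS (Finset.mem_sdiff.1 hz).1
    have hXTneS : X \ T ≠ S := by
      intro h
      have : e₂ g ∈ X \ T := by rw [h]; exact (hend g hgE).2
      exact (Finset.mem_sdiff.1 this).2 hg2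
    have hXTcut : 2 * k ≤ edgeCut e₁ e₂ E (X \ T) := hcut _ hXTS hXT hXTneS
    have hTXtight : edgeCut e₁ e₂ E (T \ X) = 2 * k := by omega
    have hmem : T \ X ∈ F :=
      Finset.mem_filter.2 ⟨Finset.mem_powerset.2 hTXS, hTX_ne, hTXneS, hTXtight⟩
    have := hTmin _ hmem
    have := Finset.card_lt_card hTXssub
    omega
  · -- X ⊆ T: X is a smaller tight set
    rw [Finset.not_nonempty_iff_eq_empty, Finset.sdiff_eq_empty_iff_subset] at hXT
    have hXssub : X ⊂ T := by
      rw [Finset.ssubset_iff_subset_ne]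
      refine ⟨hXT, fun h => ?_⟩
      rw [h] at hgy
      exact hgy hg2
    have hmem : X ∈ F :=
      Finset.mem_filter.2 ⟨Finset.mem_powerset.2 hXS, hXne, hXneS, hXcut⟩
    have := hTmin _ hmem
    have := Finset.card_lt_card hXssub
    omega

/-! ### Lovász splitting-off: finding a good pair -/

lemma oe_mem_erase {S : Finset V} {s : V} {b : α}
    (hend : ∀ e ∈ E, e₁ e ∈ S ∧ e₂ e ∈ S) (hbE : b ∈ E) (hsb : isS e₁ e₂ s b) :
    oe e₁ e₂ s b ∈ S.erase s := by
  obtain ⟨h1, h2⟩ := hend b hbE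
  rcases hsb with ⟨hb1, hb2⟩ | ⟨hb1, hb2⟩
  · rw [oe, if_pos hb1]; exact Finset.mem_erase.2 ⟨hb2, h2⟩
  · rw [oe, if_neg hb1]; exact Finset.mem_erase.2 ⟨hb1, h1⟩

lemma exists_split_pair {S : Finset V} {k : ℕ} {s : V}
    (hsS : s ∈ S)
    (hend : ∀ e ∈ E, e₁ e ∈ S ∧ e₂ e ∈ S)
    (hnl : ∀ e ∈ E, ¬(e₁ e = s ∧ e₂ e = s))
    (hcut' : ∀ X : Finset V, X ⊆ S.erase s → X.Nonempty → X ≠ S.erase s →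
      2 * k ≤ edgeCut e₁ e₂ E X)
    (hdeg_even : Even (edgeCut e₁ e₂ E {s}))
    {a : α} (haE : a ∈ E) (hsa : isS e₁ e₂ s a) :
    ∃ b ∈ E, b ≠ a ∧ isS e₁ e₂ s b ∧
      ∀ X : Finset V, X ⊆ S.erase s → X ≠ S.erase s →
        oe e₁ e₂ s a ∈ X → oe e₁ e₂ s b ∈ X → 2 * k + 2 ≤ edgeCut e₁ e₂ E X := by
  classical
  set t := oe e₁ e₂ s a with ht
  set deg := edgeCut e₁ e₂ E {s} with hdeg
  have htS : t ∈ S.erase s := oe_mem_erase e₁ e₂ E hend haE hsa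
  by_contra hbad
  push_neg at hbad
  -- dangerous sets
  set Dang : Finset (Finset V) := (S.erase s).powerset.filter
    (fun X => X ≠ S.erase s ∧ t ∈ X ∧ edgeCut e₁ e₂ E X ≤ 2 * k + 1) with hDang
  have memDang : ∀ X ∈ Dang, X ⊆ S.erase s ∧ X ≠ S.erase s ∧ t ∈ X ∧
      edgeCut e₁ e₂ E X ≤ 2 * k + 1 := by
    intro X hX
    obtain ⟨h1, h2⟩ := Finset.mem_filter.1 hX
    exact ⟨Finset.mem_powerset.1 h1, h2⟩
  have mkDang : ∀ X : Finset V, X ⊆ S.erase s → X ≠ S.erase s → t ∈ X →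
      edgeCut e₁ e₂ E X ≤ 2 * k + 1 → X ∈ Dang := by
    intro X h1 h2 h3 h4
    exact Finset.mem_filter.2 ⟨Finset.mem_powerset.2 h1, h2, h3, h4⟩
  -- claim 1
  have claim1 : ∀ X ∈ Dang, 2 * sdeg e₁ e₂ E s X ≤ deg := by
    intro X hX
    obtain ⟨h1, h2, h3, h4⟩ := memDang X hX
    have hid := cut_partition e₁ e₂ E hend hnl h1
    have hY : 2 * k ≤ edgeCut e₁ e₂ E ((S.erase s) \ X) := by
      apply hcut' _ Finset.sdiff_subset
      · obtain ⟨z, hz1, hz2⟩ := Finset.exists_of_ssubset (Finset.ssubset_iff_subset_ne.2 ⟨h1, h2⟩)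
        exact ⟨z, Finset.mem_sdiff.2 ⟨hz1, hz2⟩⟩
      · intro h
        have : t ∈ (S.erase s) \ X := by rw [h]; exact htS
        exact (Finset.mem_sdiff.1 this).2 h3
    obtain ⟨m, hm⟩ := hdeg_even
    rw [← hdeg] at hid
    omega
  -- degree is positive hence at least 2
  have hdegpos : 1 ≤ deg := by
    rw [hdeg, cut_singleton]
    exact Finset.card_pos.2 ⟨a, Finset.mem_filter.2 ⟨haE, hsa⟩⟩
  have hdeg2 : 2 ≤ deg := by
    obtain ⟨m, hm⟩ := hdeg_even
    omega
  -- maximal dangerous extensions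
  have maxDang : ∀ X ∈ Dang, ∃ M ∈ Dang, X ⊆ M ∧ ∀ Y ∈ Dang, M ⊆ Y → Y = M := by
    intro X hX
    obtain ⟨M, hM, hMmax⟩ := Finset.exists_maximal (s := Dang.filter (fun Y => X ⊆ Y))
      ⟨X, Finset.mem_filter.2 ⟨hX, Finset.Subset.refl X⟩⟩
    obtain ⟨hM1, hM2⟩ := Finset.mem_filter.1 hM
    refine ⟨M, hM1, hM2, fun Y hY hMY => ?_⟩
    by_contra hne
    exact hne (Finset.Subset.antisymm (hMmax (Finset.mem_filter.2 ⟨hY, hM2.trans hMY⟩) hMY) hMY)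
  -- two dangerous sets cannot cover all neighbours of s
  have cover_contra : ∀ X₁ ∈ Dang, ∀ X₂ ∈ Dang,
      (∀ b ∈ E, isS e₁ e₂ s b → oe e₁ e₂ s b ∈ X₁ ∪ X₂) → False := by
    intro X₁ hX₁ X₂ hX₂ hcov
    have hmod := sdeg_modular e₁ e₂ E s X₁ X₂
    have hcovU : sdeg e₁ e₂ E s (X₁ ∪ X₂) = deg := sdeg_eq_deg e₁ e₂ E hnl hcov
    have hI : 1 ≤ sdeg e₁ e₂ E s (X₁ ∩ X₂) := by
      apply one_le_sdeg e₁ e₂ E haE hsa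
      rw [Finset.mem_inter, ← ht]
      exact ⟨(memDang X₁ hX₁).2.2.1, (memDang X₂ hX₂).2.2.1⟩
    have := claim1 X₁ hX₁
    have := claim1 X₂ hX₂
    omega
  -- find a first maximal dangerous set
  have hfilterdeg : (E.filter (isS e₁ e₂ s)).card = deg := (cut_singleton e₁ e₂ E s).symm
  have h2c : 1 < (E.filter (isS e₁ e₂ s)).card := by omega
  obtain ⟨b₀, hb₀f, hb₀a⟩ := Finset.exists_mem_ne h2c a
  obtain ⟨hb₀E, hb₀s⟩ := Finset.mem_filter.1 hb₀f
  obtain ⟨X₀, hX₀1, hX₀2, hX₀3, hX₀4, hX₀5⟩ := hbad b₀ hb₀E hb₀a hb₀s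
  have hX₀D : X₀ ∈ Dang := mkDang X₀ hX₀1 hX₀2 hX₀3 (by omega)
  obtain ⟨M₁, hM₁D, _, hM₁max⟩ := maxDang X₀ hX₀D
  obtain ⟨hM₁sub, hM₁ne, hM₁t, hM₁cut⟩ := memDang M₁ hM₁D
  -- M₁ does not cover all neighbours
  by_cases hcov1 : ∀ b ∈ E, isS e₁ e₂ s b → oe e₁ e₂ s b ∈ M₁
  · exact cover_contra M₁ hM₁D M₁ hM₁D
      (fun b hb hsb => Finset.mem_union.2 (Or.inl (hcov1 b hb hsb)))
  push_neg at hcov1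
  obtain ⟨b₁, hb₁E, hb₁s, hu₁⟩ := hcov1
  have hb₁a : b₁ ≠ a := by
    intro h
    rw [h, ← ht] at hu₁
    exact hu₁ hM₁t
  obtain ⟨X₁, hX₁1, hX₁2, hX₁3, hX₁4, hX₁5⟩ := hbad b₁ hb₁E hb₁a hb₁s
  have hX₁D : X₁ ∈ Dang := mkDang X₁ hX₁1 hX₁2 hX₁3 (by omega)
  obtain ⟨M₂, hM₂D, hX₁M₂, hM₂max⟩ := maxDang X₁ hX₁D
  obtain ⟨hM₂sub, hM₂ne, hM₂t, hM₂cut⟩ := memDang M₂ hM₂D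
  have hu₁M₂ : oe e₁ e₂ s b₁ ∈ M₂ := hX₁M₂ hX₁4
  -- incomparability
  have hM₁nsub : ¬ M₁ ⊆ M₂ := by
    intro h
    have := hM₁max M₂ hM₂D h
    rw [this] at hu₁M₂
    exact hu₁ hu₁M₂
  obtain ⟨w, hwM₁, hwM₂⟩ := Finset.not_subset.1 hM₁nsub
  -- the union cannot be everything
  by_cases hU : M₁ ∪ M₂ = S.erase s
  · apply cover_contra M₁ hM₁D M₂ hM₂D
    intro b hb hsb
    rw [hU]
    exact oe_mem_erase e₁ e₂ E hend hb hsb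
  -- union is a proper subset, not dangerous by maximality
  have hUsub : M₁ ∪ M₂ ⊆ S.erase s := Finset.union_subset hM₁sub hM₂sub
  have hUcut : 2 * k + 2 ≤ edgeCut e₁ e₂ E (M₁ ∪ M₂) := by
    by_contra hc
    push_neg at hc
    have hUD : M₁ ∪ M₂ ∈ Dang := mkDang _ hUsub hU
      (Finset.mem_union.2 (Or.inl hM₁t)) (by omega)
    have heq := hM₁max _ hUD Finset.subset_union_left
    apply hu₁
    have hmem : oe e₁ e₂ s b₁ ∈ M₁ ∪ M₂ := Finset.mem_union.2 (Or.inr hu₁M₂)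
    rwa [heq] at hmem
  have hIcut : 2 * k ≤ edgeCut e₁ e₂ E (M₁ ∩ M₂) := by
    apply hcut' _ ((Finset.inter_subset_left).trans hM₁sub)
      ⟨t, Finset.mem_inter.2 ⟨hM₁t, hM₂t⟩⟩
    intro h
    apply hM₁ne
    exact Finset.Subset.antisymm hM₁sub (h ▸ Finset.inter_subset_left)
  -- submodularity pins everything down
  have hsub := cut_submod e₁ e₂ E M₁ M₂
  have hM₁cut' : edgeCut e₁ e₂ E M₁ = 2 * k + 1 := by omega
  have hIcut' : edgeCut e₁ e₂ E (M₁ ∩ M₂) = 2 * k := by omega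
  -- posimodularity
  have hpos := cut_posimod e₁ e₂ E M₁ M₂
  have hd1 : 2 * k ≤ edgeCut e₁ e₂ E (M₁ \ M₂) := by
    apply hcut' _ ((Finset.sdiff_subset).trans hM₁sub) ⟨w, Finset.mem_sdiff.2 ⟨hwM₁, hwM₂⟩⟩
    intro h
    have : t ∈ M₁ \ M₂ := by rw [h]; exact htS
    exact (Finset.mem_sdiff.1 this).2 hM₂t
  have hd2 : 2 * k ≤ edgeCut e₁ e₂ E (M₂ \ M₁) := by
    apply hcut' _ ((Finset.sdiff_subset).trans hM₂sub)
      ⟨oe e₁ e₂ s b₁, Finset.mem_sdiff.2 ⟨hu₁M₂, hu₁⟩⟩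
    intro h
    have : t ∈ M₂ \ M₁ := by rw [h]; exact htS
    exact (Finset.mem_sdiff.1 this).2 hM₁t
  have hbc : 1 ≤ btwnc e₁ e₂ E (M₁ ∩ M₂) (M₁ ∪ M₂) := by
    have hsnotU : s ∉ M₁ ∪ M₂ := fun h => (Finset.mem_erase.1 (hUsub h)).1 rfl
    have htI : t ∈ M₁ ∩ M₂ := Finset.mem_inter.2 ⟨hM₁t, hM₂t⟩
    rcases hsa with ⟨ha1, ha2⟩ | ⟨ha1, ha2⟩
    · apply one_le_btwnc e₁ e₂ E haE
      · rw [ht, oe, if_pos ha1] at htI; exact htI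
      · rw [ha1]; exact hsnotU
    · apply one_le_btwnc' e₁ e₂ E haE
      · rw [ht, oe, if_neg ha1] at htI; exact htI
      · rw [ha2]; exact hsnotU
  have hd1' : edgeCut e₁ e₂ E (M₁ \ M₂) = 2 * k := by omega
  -- parity contradiction
  have hdisj : Disjoint (M₁ ∩ M₂) (M₁ \ M₂) := by
    rw [Finset.disjoint_left]
    intro z hz1 hz2
    exact (Finset.mem_sdiff.1 hz2).2 (Finset.mem_inter.1 hz1).2
  have hfin := cut_union_disjoint e₁ e₂ E hdisj
  have hIU : M₁ ∩ M₂ ∪ M₁ \ M₂ = M₁ := by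
    ext z
    simp only [Finset.mem_union, Finset.mem_inter, Finset.mem_sdiff]
    tauto
  rw [hIU] at hfin
  omega

/-! ### complete splitting at a vertex -/

lemma inDeg_erase_s {T H : α → V} {F : Finset α} {s : V}
    (h : ∀ e ∈ F, T e ≠ s ∧ H e ≠ s) (X : Finset V) :
    inDeg T H F X = inDeg T H F (X.erase s) := by
  unfold inDeg
  refine congrArg _ (Finset.filter_congr fun e he => ?_)
  obtain ⟨h1, h2⟩ := h e he
  simp only [Finset.mem_erase, h1, h2, true_and, ne_eq, not_false_eq_true]

lemma eq_of_erase_eq {S X : Finset V} {s : V} (hX : X ⊆ S) (hsX : s ∈ X) (hsS : s ∈ S)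
    (h : X.erase s = S.erase s) : X = S := by
  rw [← Finset.insert_erase hsX, ← Finset.insert_erase hsS, h]

lemma erase_nonempty_of_ne_singleton {X : Finset V} {s : V} (hne : X.Nonempty)
    (h : X ≠ {s}) : (X.erase s).Nonempty := by
  by_cases hsX : s ∈ X
  · rw [Finset.nonempty_iff_ne_empty]
    intro hemp
    apply h
    apply Finset.Subset.antisymm
    · intro z hz
      rw [Finset.mem_singleton]
      by_contra hzs
      have : z ∈ X.erase s := Finset.mem_erase.2 ⟨hzs, hz⟩
      rw [hemp] at this
      exact absurd this (Finset.notMem_empty z)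
    · exact Finset.singleton_subset_iff.2 hsX
  · rwa [Finset.erase_eq_of_notMem hsX]

lemma completeSplit {S : Finset V} {k : ℕ} {s : V} (hsS : s ∈ S) (hk : 1 ≤ k) :
    ∀ d : ℕ, ∀ (E : Finset α) (e₁ e₂ : α → V), edgeCut e₁ e₂ E {s} = d →
    (∀ e ∈ E, e₁ e ∈ S ∧ e₂ e ∈ S) → (∀ e ∈ E, ¬(e₁ e = s ∧ e₂ e = s)) →
    (∀ X : Finset V, X ⊆ S.erase s → X.Nonempty → X ≠ S.erase s →
      2 * k ≤ edgeCut e₁ e₂ E X) →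
    ∀ p : ℕ, d + 2 * p = 2 * k →
    ∃ (E' : Finset α) (f₁ f₂ : α → V), E' ⊆ E ∧
      (∀ e ∈ E', f₁ e ∈ S.erase s ∧ f₂ e ∈ S.erase s) ∧
      (∀ X : Finset V, X ⊆ S.erase s → X.Nonempty → X ≠ S.erase s →
        2 * k ≤ edgeCut f₁ f₂ E' X) ∧
      (∀ σ' : α → Bool,
        (∀ Y : Finset V, Y ⊆ S.erase s → Y.Nonempty → Y ≠ S.erase s →
          k ≤ inDeg (oT f₁ f₂ σ') (oH f₁ f₂ σ') E' Y) →
        ∃ σ : α → Bool, ∀ X : Finset V, X ⊆ S → X.Nonempty → X ≠ S →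
          k ≤ inDeg (oT e₁ e₂ σ) (oH e₁ e₂ σ) E X
            + p * ((if X = {s} then 1 else 0) + (if X = S.erase s then 1 else 0))) := by
  intro d
  induction d using Nat.strong_induction_on with
  | _ d IH =>
  intro E e₁ e₂ hdeg hend hnl hcut' p hp
  rcases Nat.eq_zero_or_pos d with hd0 | hdpos
  · -- base case: no edges at s
    subst hd0
    have hpk : p = k := by omega
    have hnos : ∀ e ∈ E, e₁ e ≠ s ∧ e₂ e ≠ s := by
      intro e he
      have hfe : (E.filter (isS e₁ e₂ s)).card = 0 := by
        rw [← cut_singleton]; exact hdeg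
      have : ¬ isS e₁ e₂ s e := by
        intro hiss
        have : e ∈ E.filter (isS e₁ e₂ s) := Finset.mem_filter.2 ⟨he, hiss⟩
        rw [Finset.card_eq_zero.1 hfe] at this
        exact absurd this (Finset.notMem_empty e)
      rw [isS] at this
      push_neg at this
      constructor
      · intro h1
        exact hnl e he ⟨h1, this.1 h1⟩
      · intro h2
        by_cases h1 : e₁ e = s
        · exact hnl e he ⟨h1, h2⟩
        · exact (this.2 h1) h2
    refine ⟨E, e₁, e₂, Finset.Subset.refl E, ?_, ?_, ?_⟩
    · intro e he
      obtain ⟨hS1, hS2⟩ := hend e he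
      obtain ⟨h1, h2⟩ := hnos e he
      exact ⟨Finset.mem_erase.2 ⟨h1, hS1⟩, Finset.mem_erase.2 ⟨h2, hS2⟩⟩
    · exact hcut'
    · intro σ' hgood
      refine ⟨σ', fun X hXS hXne hXneS => ?_⟩
      by_cases hX1 : X = {s}
      · have : k ≤ p * ((if X = {s} then 1 else 0) + (if X = S.erase s then 1 else 0)) := by
          rw [if_pos hX1, hpk]
          calc k = k * 1 := (mul_one k).symm
          _ ≤ k * (1 + (if X = S.erase s then 1 else 0)) :=
            Nat.mul_le_mul_left k (by omega)
        omega
      by_cases hX2 : X = S.erase s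
      · have : k ≤ p * ((if X = {s} then 1 else 0) + (if X = S.erase s then 1 else 0)) := by
          rw [if_pos hX2, if_neg hX1, hpk]
          omega
        omega
      · have hTne : ∀ e ∈ E, oT e₁ e₂ σ' e ≠ s ∧ oH e₁ e₂ σ' e ≠ s := by
          intro e he
          obtain ⟨h1, h2⟩ := hnos e he
          constructor <;> · simp only [oT, oH]; split <;> assumption
        have key : k ≤ inDeg (oT e₁ e₂ σ') (oH e₁ e₂ σ') E X := by
          by_cases hsX : s ∈ X
          · rw [inDeg_erase_s hTne]
            apply hgood
            · intro z hz
              obtain ⟨hz1, hz2⟩ := Finset.mem_erase.1 hz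
              exact Finset.mem_erase.2 ⟨hz1, hXS hz2⟩
            · exact erase_nonempty_of_ne_singleton hXne hX1
            · intro h
              exact hXneS (eq_of_erase_eq hXS hsX hsS h)
          · apply hgood
            · intro z hz
              exact Finset.mem_erase.2 ⟨fun h => hsX (h ▸ hz), hXS hz⟩
            · exact hXne
            · exact hX2
        omega
  · -- inductive step: split off one pair at s
    have hd2 : 2 ≤ d := by omega
    -- an edge at s
    have hfe : 1 ≤ (E.filter (isS e₁ e₂ s)).card := by
      rw [← cut_singleton]; omega
    obtain ⟨a, haf⟩ := Finset.card_pos.1 hfe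
    obtain ⟨haE, hsa⟩ := Finset.mem_filter.1 haf
    have heven : Even (edgeCut e₁ e₂ E {s}) := by
      refine ⟨k - p, ?_⟩; omega
    obtain ⟨b, hbE, hba, hsb, hgoodpair⟩ :=
      exists_split_pair e₁ e₂ E hsS hend hnl hcut' heven haE hsa
    set t := oe e₁ e₂ s a with htdef
    set u := oe e₁ e₂ s b with hudef
    have htS : t ∈ S.erase s := oe_mem_erase e₁ e₂ E hend haE hsa
    have huS : u ∈ S.erase s := oe_mem_erase e₁ e₂ E hend hbE hsb
    have hts : t ≠ s := (Finset.mem_erase.1 htS).1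
    have hus : u ≠ s := (Finset.mem_erase.1 huS).1
    have hea : (e₁ a = s ∧ e₂ a = t) ∨ (e₁ a = t ∧ e₂ a = s) := by
      rcases hsa with ⟨h1, h2⟩ | ⟨h1, h2⟩
      · left; exact ⟨h1, by rw [htdef, oe, if_pos h1]⟩
      · right; exact ⟨by rw [htdef, oe, if_neg h1], h2⟩
    have heb : (e₁ b = s ∧ e₂ b = u) ∨ (e₁ b = u ∧ e₂ b = s) := by
      rcases hsb with ⟨h1, h2⟩ | ⟨h1, h2⟩
      · left; exact ⟨h1, by rw [hudef, oe, if_pos h1]⟩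
      · right; exact ⟨by rw [hudef, oe, if_neg h1], h2⟩
    have hab : b ≠ a := hba
    set E₁ := E.erase b with hE₁
    set f₁ := Function.update e₁ a t with hf₁
    set f₂ := Function.update e₂ a u with hf₂
    -- new hypotheses
    have hend₁ : ∀ e ∈ E₁, f₁ e ∈ S ∧ f₂ e ∈ S := by
      intro e he
      by_cases hez : e = a
      · subst hez
        rw [hf₁, hf₂, Function.update_self, Function.update_self]
        exact ⟨(Finset.mem_erase.1 htS).2, (Finset.mem_erase.1 huS).2⟩
      · rw [hf₁, hf₂, Function.update_of_ne hez, Function.update_of_ne hez]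
        exact hend e (Finset.mem_of_mem_erase he)
    have hnl₁ : ∀ e ∈ E₁, ¬(f₁ e = s ∧ f₂ e = s) := by
      intro e he
      by_cases hez : e = a
      · subst hez
        rw [hf₁, hf₂, Function.update_self, Function.update_self]
        exact fun h => hts h.1
      · rw [hf₁, hf₂, Function.update_of_ne hez, Function.update_of_ne hez]
        exact hnl e (Finset.mem_of_mem_erase he)
    have hcut₁ : ∀ X : Finset V, X ⊆ S.erase s → X.Nonempty → X ≠ S.erase s →
        2 * k ≤ edgeCut f₁ f₂ E₁ X := by
      intro X hXS hXne hXneS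
      have hsX : s ∉ X := fun h => (Finset.mem_erase.1 (hXS h)).1 rfl
      have hm := merge_cut e₁ e₂ E haE hbE (Ne.symm hba) hea heb hsX
      rw [← hf₁, ← hf₂, ← hE₁] at hm
      by_cases htu : t ∈ X ∧ u ∈ X
      · have := hgoodpair X hXS hXneS htu.1 htu.2
        rw [if_pos htu] at hm
        omega
      · rw [if_neg htu] at hm
        have := hcut' X hXS hXne hXneS
        omega
    have hdeg₁ : edgeCut f₁ f₂ E₁ {s} = d - 2 := by
      have hmd := merge_deg e₁ e₂ E haE hbE (Ne.symm hba) hea heb hts hus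
      rw [← hf₁, ← hf₂, ← hE₁] at hmd
      omega
    obtain ⟨E', g₁, g₂, hE'sub, hend', hcut'', hlift'⟩ :=
      IH (d - 2) (by omega) E₁ f₁ f₂ hdeg₁ hend₁ hnl₁ hcut₁ (p + 1) (by omega)
    refine ⟨E', g₁, g₂, hE'sub.trans (Finset.erase_subset b E), hend', hcut'', ?_⟩
    intro σ' hgood
    obtain ⟨σ₁, hσ₁⟩ := hlift' σ' hgood
    refine ⟨(fun x => if x = a then (if σ₁ a then decide (e₂ a = s) else decide (e₂ a = t))
          else if x = b then (if σ₁ a then decide (e₂ b = u) else decide (e₂ b = s)) else σ₁ x),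
      fun X hXS hXne hXneS => ?_⟩
    have hl := lift_inDeg e₁ e₂ E haE hbE (Ne.symm hba) hea heb hts hus σ₁ X
    rw [← hf₁, ← hf₂, ← hE₁] at hl
    have hinv := hσ₁ X hXS hXne hXneS
    have hind : ((if X = {s} then 1 else 0) + (if X = S.erase s then 1 else 0) : ℕ)
        ≤ (if s ∈ X ∧ t ∉ X ∧ u ∉ X then 1 else 0)
          + (if s ∉ X ∧ t ∈ X ∧ u ∈ X then 1 else 0) := by
      by_cases hX1 : X = {s}
      · have hcond : s ∈ X ∧ t ∉ X ∧ u ∉ X := by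
          subst hX1
          refine ⟨Finset.mem_singleton_self s, ?_, ?_⟩ <;>
            · rw [Finset.mem_singleton]; assumption
        have hX2 : X ≠ S.erase s := by
          subst hX1
          intro h
          have : s ∈ S.erase s := by rw [← h]; exact Finset.mem_singleton_self s
          exact (Finset.mem_erase.1 this).1 rfl
        rw [if_pos hX1, if_neg hX2, if_pos hcond]
        omega
      by_cases hX2 : X = S.erase s
      · have hcond : s ∉ X ∧ t ∈ X ∧ u ∈ X := by
          subst hX2
          exact ⟨fun h => (Finset.mem_erase.1 h).1 rfl, htS, huS⟩
        rw [if_neg hX1, if_pos hX2, if_pos hcond]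
        omega
      · rw [if_neg hX1, if_neg hX2]
        omega
    have hmul : (p + 1) * ((if X = {s} then 1 else 0) + (if X = S.erase s then 1 else 0))
        = p * ((if X = {s} then 1 else 0) + (if X = S.erase s then 1 else 0))
          + ((if X = {s} then 1 else 0) + (if X = S.erase s then 1 else 0)) := by ring
    omega

/-! ### base case: two vertices -/

lemma base_two {S : Finset V} {k : ℕ} (hS2 : S.card = 2)
    (hend : ∀ e ∈ E, e₁ e ∈ S ∧ e₂ e ∈ S)
    (hcut : ∀ X : Finset V, X ⊆ S → X.Nonempty → X ≠ S → 2 * k ≤ edgeCut e₁ e₂ E X) :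
    ∃ σ : α → Bool, ∀ X : Finset V, X ⊆ S → X.Nonempty → X ≠ S →
      k ≤ inDeg (oT e₁ e₂ σ) (oH e₁ e₂ σ) E X := by
  obtain ⟨x, y, hxy, hSxy⟩ := Finset.card_eq_two.1 hS2
  have hxS : x ∈ S := by rw [hSxy]; exact Finset.mem_insert_self x {y}
  have hyS : y ∈ S := by rw [hSxy]; exact Finset.mem_insert_of_mem (Finset.mem_singleton_self y)
  have hxneS : ({x} : Finset V) ≠ S := by
    intro h; rw [← h] at hyS; rw [Finset.mem_singleton] at hyS; exact hxy hyS.symm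
  have hyneS : ({y} : Finset V) ≠ S := by
    intro h; rw [← h] at hxS; rw [Finset.mem_singleton] at hxS; exact hxy hxS
  have hcx := hcut {x} (Finset.singleton_subset_iff.2 hxS) (Finset.singleton_nonempty x) hxneS
  set C := E.filter (fun a => (e₁ a ∈ ({x} : Finset V) ∧ e₂ a ∉ ({x} : Finset V)) ∨
    (e₁ a ∉ ({x} : Finset V) ∧ e₂ a ∈ ({x} : Finset V))) with hC
  have hCcard : 2 * k ≤ C.card := hcx
  have hkC : k ≤ C.card := by omega
  obtain ⟨F, hFC, hFcard⟩ := Finset.exists_subset_card_eq hkC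
  set σ : α → Bool := fun a => if a ∈ F then decide (e₂ a = x) else decide (e₂ a = y) with hσ
  have hmemC : ∀ a ∈ C, (e₁ a = x ∧ e₂ a = y) ∨ (e₁ a = y ∧ e₂ a = x) := by
    intro a ha
    obtain ⟨haE, hac⟩ := Finset.mem_filter.1 ha
    obtain ⟨h1, h2⟩ := hend a haE
    rw [hSxy] at h1 h2
    simp only [Finset.mem_insert, Finset.mem_singleton] at h1 h2 hac
    tauto
  have hinx : k ≤ inDeg (oT e₁ e₂ σ) (oH e₁ e₂ σ) E {x} := by
    rw [← hFcard]
    apply Finset.card_le_card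
    intro a haF
    have haC := hFC haF
    have haE := (Finset.mem_filter.1 haC).1
    rw [Finset.mem_filter]
    refine ⟨haE, ?_⟩
    rcases hmemC a haC with ⟨h1, h2⟩ | ⟨h1, h2⟩
    · have : σ a = false := by
        rw [hσ]; simp only [if_pos haF, h2]
        simp [hxy, Ne.symm hxy]
      simp [oT, oH, this, h1, h2, hxy, Ne.symm hxy]
    · have : σ a = true := by
        rw [hσ]; simp only [if_pos haF, h2]
        simp
      simp [oT, oH, this, h1, h2, hxy, Ne.symm hxy]
  have hiny : k ≤ inDeg (oT e₁ e₂ σ) (oH e₁ e₂ σ) E {y} := by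
    have hcard : k ≤ (C \ F).card := by
      rw [Finset.card_sdiff_of_subset hFC, hFcard]
      omega
    refine le_trans hcard (Finset.card_le_card ?_)
    intro a haCF
    obtain ⟨haC, haF⟩ := Finset.mem_sdiff.1 haCF
    have haE := (Finset.mem_filter.1 haC).1
    rw [Finset.mem_filter]
    refine ⟨haE, ?_⟩
    rcases hmemC a haC with ⟨h1, h2⟩ | ⟨h1, h2⟩
    · have : σ a = true := by
        rw [hσ]; simp only [if_neg haF, h2]
        simp
      simp [oT, oH, this, h1, h2, hxy, Ne.symm hxy]
    · have : σ a = false := by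
        rw [hσ]; simp only [if_neg haF, h2]
        simp [hxy, Ne.symm hxy]
      simp [oT, oH, this, h1, h2, hxy, Ne.symm hxy]
  refine ⟨σ, fun X hXS hXne hXneS => ?_⟩
  have : X = {x} ∨ X = {y} := by
    by_cases hx : x ∈ X <;> by_cases hy : y ∈ X
    · exfalso
      apply hXneS
      apply Finset.Subset.antisymm hXS
      rw [hSxy]
      intro z hz
      simp only [Finset.mem_insert, Finset.mem_singleton] at hz
      rcases hz with h | h
      · rwa [h]
      · rwa [h]
    · left
      apply Finset.Subset.antisymm
      · intro z hz
        have := hXS hz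
        rw [hSxy] at this
        simp only [Finset.mem_insert, Finset.mem_singleton] at this
        rw [Finset.mem_singleton]
        rcases this with h | h
        · exact h
        · exact absurd (h ▸ hz) hy
      · exact Finset.singleton_subset_iff.2 hx
    · right
      apply Finset.Subset.antisymm
      · intro z hz
        have := hXS hz
        rw [hSxy] at this
        simp only [Finset.mem_insert, Finset.mem_singleton] at this
        rw [Finset.mem_singleton]
        rcases this with h | h
        · exact absurd (h ▸ hz) hx
        · exact h
      · exact Finset.singleton_subset_iff.2 hy
    · exfalso
      obtain ⟨z, hz⟩ := hXne
      have := hXS hz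
      rw [hSxy] at this
      simp only [Finset.mem_insert, Finset.mem_singleton] at this
      rcases this with h | h
      · exact hx (h ▸ hz)
      · exact hy (h ▸ hz)
  rcases this with h | h
  · rw [h]; exact hinx
  · rw [h]; exact hiny

/-! ### main induction -/

theorem auxMain : ∀ n : ℕ, ∀ (S : Finset V) (E : Finset α) (e₁ e₂ : α → V) (k : ℕ),
    S.card + E.card ≤ n → 2 ≤ S.card →
    (∀ e ∈ E, e₁ e ∈ S ∧ e₂ e ∈ S) →
    (∀ X : Finset V, X ⊆ S → X.Nonempty → X ≠ S → 2 * k ≤ edgeCut e₁ e₂ E X) →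
    ∃ σ : α → Bool, ∀ X : Finset V, X ⊆ S → X.Nonempty → X ≠ S →
      k ≤ inDeg (oT e₁ e₂ σ) (oH e₁ e₂ σ) E X := by
  intro n
  induction n with
  | zero =>
    intro S E e₁ e₂ k hn hS2 _ _
    omega
  | succ n ihn =>
    intro S E e₁ e₂ k hn hS2 hend hcut
    rcases Nat.eq_zero_or_pos k with hk0 | hk
    · exact ⟨fun _ => true, fun X _ _ _ => hk0 ▸ Nat.zero_le _⟩
    by_cases hS2' : S.card = 2
    · exact base_two e₁ e₂ E hS2' hend hcut
    have hS3 : 3 ≤ S.card := by omega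
    by_cases hdel : ∃ a ∈ E, ∀ X : Finset V, X ⊆ S → X.Nonempty → X ≠ S →
        2 * k ≤ edgeCut e₁ e₂ (E.erase a) X
    · obtain ⟨a, haE, hcutE⟩ := hdel
      have hsum : S.card + (E.erase a).card ≤ n := by
        rw [Finset.card_erase_of_mem haE]
        have : 1 ≤ E.card := Finset.card_pos.2 ⟨a, haE⟩
        omega
      obtain ⟨σ, hσ⟩ := ihn S (E.erase a) e₁ e₂ k hsum hS2
        (fun e he => hend e (Finset.mem_of_mem_erase he)) hcutE
      exact ⟨σ, fun X hXS hXne hXneS =>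
        le_trans (hσ X hXS hXne hXneS) (inDeg_mono_erase E _ _ a X)⟩
    · push_neg at hdel
      have htight : ∀ a ∈ E, ∃ X : Finset V, X ⊆ S ∧ X.Nonempty ∧ X ≠ S ∧
          edgeCut e₁ e₂ (E.erase a) X < 2 * k := by
        intro a ha
        obtain ⟨X, h1, h2, h3, h4⟩ := hdel a ha
        exact ⟨X, h1, h2, h3, h4⟩
      obtain ⟨s, hsS, hscut⟩ := exists_tight_singleton e₁ e₂ E hk hS3 hend hcut htight
      have hnl : ∀ e ∈ E, ¬(e₁ e = s ∧ e₂ e = s) := by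
        intro ℓ hℓ hloop
        obtain ⟨X, h1, h2, h3, h4⟩ := hdel ℓ hℓ
        have hid := cut_erase e₁ e₂ E hℓ X
        have : ¬((e₁ ℓ ∈ X ∧ e₂ ℓ ∉ X) ∨ (e₁ ℓ ∉ X ∧ e₂ ℓ ∈ X)) := by
          rw [hloop.1, hloop.2]
          tauto
        rw [if_neg this] at hid
        have := hcut X h1 h2 h3
        omega
      have hcut' : ∀ X : Finset V, X ⊆ S.erase s → X.Nonempty → X ≠ S.erase s →
          2 * k ≤ edgeCut e₁ e₂ E X := by
        intro X hXS hXne _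
        apply hcut X (hXS.trans (Finset.erase_subset s S)) hXne
        intro h
        obtain ⟨z, hz⟩ := hXne
        have : s ∉ X := fun hs => (Finset.mem_erase.1 (hXS hs)).1 rfl
        rw [h] at this
        exact this hsS
      obtain ⟨E', f₁, f₂, hE'sub, hend', hcut'', hlift⟩ :=
        completeSplit hsS hk (2 * k) E e₁ e₂ hscut hend hnl hcut' 0 (by omega)
      have hsum : (S.erase s).card + E'.card ≤ n := by
        rw [Finset.card_erase_of_mem hsS]
        have h1 : E'.card ≤ E.card := Finset.card_le_card hE'sub
        omega
      have hS2'' : 2 ≤ (S.erase s).card := by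
        rw [Finset.card_erase_of_mem hsS]
        omega
      obtain ⟨σ', hσ'⟩ := ihn (S.erase s) E' f₁ f₂ k hsum hS2'' hend' hcut''
      obtain ⟨σ, hσ⟩ := hlift σ' hσ'
      refine ⟨σ, fun X hXS hXne hXneS => ?_⟩
      have := hσ X hXS hXne hXneS
      omega

/-! ### the theorem -/

/-- Nash-Williams: a multigraph has a `k`-arc-connected orientation iff it is
`2k`-edge-connected. -/
theorem stmt11 (e₁ e₂ : α → V) (E : Finset α) (k : ℕ) (hV : 2 ≤ Fintype.card V) :
    (∃ σ : α → Bool, k ≤ lam (oT e₁ e₂ σ) (oH e₁ e₂ σ) E) ↔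
    (∀ X : Finset V, X.Nonempty → X ≠ Finset.univ → 2 * k ≤ edgeCut e₁ e₂ E X) := by
  constructor
  · rintro ⟨σ, hσ⟩ X hXne hXuniv
    have hmemX : inDeg (oT e₁ e₂ σ) (oH e₁ e₂ σ) E X ∈
        {n | ∃ Y : Finset V, Y.Nonempty ∧ Y ≠ Finset.univ ∧
          inDeg (oT e₁ e₂ σ) (oH e₁ e₂ σ) E Y = n} := ⟨X, hXne, hXuniv, rfl⟩
    have hX : k ≤ inDeg (oT e₁ e₂ σ) (oH e₁ e₂ σ) E X :=
      le_trans hσ (Nat.sInf_le hmemX)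
    have hXcne : Xᶜ.Nonempty := by
      rw [Finset.nonempty_iff_ne_empty]
      intro h
      apply hXuniv
      rwa [Finset.compl_eq_empty_iff] at h
    have hXcuniv : Xᶜ ≠ Finset.univ := by
      intro h
      rw [Finset.compl_eq_univ_iff] at h
      rw [h] at hXne
      exact Finset.not_nonempty_empty hXne
    have hmemXc : inDeg (oT e₁ e₂ σ) (oH e₁ e₂ σ) E Xᶜ ∈
        {n | ∃ Y : Finset V, Y.Nonempty ∧ Y ≠ Finset.univ ∧
          inDeg (oT e₁ e₂ σ) (oH e₁ e₂ σ) E Y = n} := ⟨Xᶜ, hXcne, hXcuniv, rfl⟩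
    have hXc : k ≤ inDeg (oT e₁ e₂ σ) (oH e₁ e₂ σ) E Xᶜ :=
      le_trans hσ (Nat.sInf_le hmemXc)
    have hid := inDeg_add_compl e₁ e₂ E σ X
    omega
  · intro hcut
    obtain ⟨σ, hσ⟩ := auxMain ((Finset.univ : Finset V).card + E.card)
      Finset.univ E e₁ e₂ k (le_refl _)
      (by rw [Finset.card_univ]; exact hV)
      (fun e _ => ⟨Finset.mem_univ _, Finset.mem_univ _⟩)
      (fun X _ hXne hXneS => hcut X hXne hXneS)
    refine ⟨σ, ?_⟩
    apply le_csInf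
    · obtain ⟨v, _⟩ := Finset.card_pos.1 (by rw [Finset.card_univ]; omega :
        0 < (Finset.univ : Finset V).card)
      refine ⟨inDeg (oT e₁ e₂ σ) (oH e₁ e₂ σ) E {v}, {v}, Finset.singleton_nonempty v, ?_, rfl⟩
      intro h
      have := Finset.card_univ (α := V)
      rw [← h] at this
      simp only [Finset.card_singleton] at this
      omega
    · rintro b ⟨Y, hYne, hYuniv, rfl⟩
      exact hσ Y (Finset.subset_univ Y) hYne hYuniv
end

section
/- Let D = (V, A) be a digraph with λ(D) = λ ≥ 1, and let Y ⊊ V with d⁺(Y) = λ. Let X₁, …, X_m ⊆ Y be pairwise disjoint nonempty sets, each satisfying d⁺_F(X_i) − d⁻_F(X_i) ≥ k − λ for some fixed k and arc set F ⊆ A with every arc of F leaving ∪X_i also leaving Y. If moreover 3λ ≤ 2k, then m ≤ 1. -/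
open Finset

variable {V α : Type*} [Fintype V] [DecidableEq V] [Fintype α] [DecidableEq α]

/-- The counting step: with `λ = λ(D) ≥ 1`, `3λ ≤ 2k`, `d⁺(Y) = λ`, pairwise disjoint
nonempty sets `Xᵢ ⊆ Y` each with `d⁺_F(Xᵢ) - d⁻_F(Xᵢ) ≥ k - λ ≥ 1`, every arc of `F`
leaving `⋃ Xᵢ` also leaving `Y`, and an arc of `F` entering `⋃ Xᵢ` from outside `Y`,
there is at most one such set. -/
theorem stmt16 (tail head : α → V) (A F : Finset α) (hF : F ⊆ A)
    (k lam0 : ℕ) (hlam : lam tail head A = lam0) (h1 : 1 ≤ lam0)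
    (h3 : 3 * lam0 ≤ 2 * k) (hk : lam0 + 1 ≤ k)
    (Y : Finset V) (hYne : Y.Nonempty) (hYu : Y ≠ Finset.univ)
    (hYout : outDeg tail head A Y = lam0)
    (m : ℕ) (X : Fin m → Finset V)
    (hXne : ∀ i, (X i).Nonempty) (hXY : ∀ i, X i ⊆ Y)
    (hdisj : ∀ i j, i ≠ j → Disjoint (X i) (X j))
    (hXdiff : ∀ i, (k : ℤ) - (lam0 : ℤ)
      ≤ (outDeg tail head F (X i) : ℤ) - (inDeg tail head F (X i) : ℤ))
    (hleave : ∀ a ∈ F, tail a ∈ Finset.univ.biUnion X → head a ∉ Finset.univ.biUnion X →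
      head a ∉ Y)
    (henter : 1 ≤ (F.filter fun a => tail a ∉ Y ∧ head a ∈ Finset.univ.biUnion X).card) :
    m ≤ 1 := by
  by_contra hm
  push_neg at hm
  set U := Finset.univ.biUnion X with hU
  have hmemU : ∀ v, v ∈ U ↔ ∃ i, v ∈ X i := by
    intro v; simp [hU]
  have hUY : U ⊆ Y := by
    intro v hv
    obtain ⟨i, hi⟩ := (hmemU v).1 hv
    exact hXY i hi
  -- indicator sum lemma
  have hind : ∀ v : V, ∑ i : Fin m, (if v ∈ X i then (1 : ℤ) else 0)
      = if v ∈ U then 1 else 0 := by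
    intro v
    by_cases hv : v ∈ U
    · obtain ⟨i₀, hi₀⟩ := (hmemU v).1 hv
      rw [if_pos hv, Finset.sum_eq_single i₀]
      · simp [hi₀]
      · intro j _ hj
        rw [if_neg]
        intro h
        exact Finset.disjoint_left.1 (hdisj j i₀ hj) h hi₀
      · intro h; exact absurd (Finset.mem_univ i₀) h
    · rw [if_neg hv]
      apply Finset.sum_eq_zero
      intro i _
      rw [if_neg]
      intro h
      exact hv ((hmemU v).2 ⟨i, h⟩)
  have hcard : ∀ (p : α → Prop) (_ : DecidablePred p),
      ((F.filter p).card : ℤ) = ∑ a ∈ F, if p a then (1 : ℤ) else 0 := by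
    intro p hp
    rw [Finset.card_filter]
    push_cast
    rfl
  -- pointwise identity
  have hpt : ∀ (p q : Prop) (_ : Decidable p) (_ : Decidable q),
      ((if p ∧ ¬q then (1 : ℤ) else 0) - (if ¬p ∧ q then 1 else 0))
        = (if p then 1 else 0) - (if q then 1 else 0) := by
    intro p q _ _
    by_cases hp : p <;> by_cases hq : q <;> simp [hp, hq]
  -- key sum equality
  have hkey : ∑ i : Fin m, ((outDeg tail head F (X i) : ℤ) - (inDeg tail head F (X i) : ℤ))
      = (outDeg tail head F U : ℤ) - (inDeg tail head F U : ℤ) := by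
    have step : ∀ S : Finset V,
        ((outDeg tail head F S : ℤ) - (inDeg tail head F S : ℤ))
        = ∑ a ∈ F, ((if tail a ∈ S then (1 : ℤ) else 0) - (if head a ∈ S then 1 else 0)) := by
      intro S
      unfold outDeg inDeg
      rw [hcard (fun a => tail a ∈ S ∧ head a ∉ S) inferInstance,
        hcard (fun a => tail a ∉ S ∧ head a ∈ S) inferInstance, ← Finset.sum_sub_distrib]
      exact Finset.sum_congr rfl fun a _ => hpt _ _ _ _
    simp only [step]
    rw [Finset.sum_comm]
    apply Finset.sum_congr rfl
    intro a _
    rw [Finset.sum_sub_distrib, hind, hind]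
  -- lower bound on the sum
  have hlow : (m : ℤ) * ((k : ℤ) - (lam0 : ℤ))
      ≤ ∑ i : Fin m, ((outDeg tail head F (X i) : ℤ) - (inDeg tail head F (X i) : ℤ)) := by
    calc (m : ℤ) * ((k : ℤ) - (lam0 : ℤ))
        = ∑ _i : Fin m, ((k : ℤ) - (lam0 : ℤ)) := by
          rw [Finset.sum_const, Finset.card_univ, Fintype.card_fin]; ring
      _ ≤ _ := Finset.sum_le_sum fun i _ => hXdiff i
  -- outDeg F U ≤ lam0
  have hout : outDeg tail head F U ≤ lam0 := by
    rw [← hYout]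
    apply Finset.card_le_card
    intro a ha
    rw [Finset.mem_filter] at ha ⊢
    obtain ⟨haF, htU, hhU⟩ := ha
    exact ⟨hF haF, hUY htU, hleave a haF htU hhU⟩
  -- inDeg F U ≥ 1
  have hin : 1 ≤ inDeg tail head F U := by
    refine le_trans henter (Finset.card_le_card ?_)
    intro a ha
    rw [Finset.mem_filter] at ha ⊢
    obtain ⟨haF, htY, hhU⟩ := ha
    exact ⟨haF, fun h => htY (hUY h), hhU⟩
  have hmain : (m : ℤ) * ((k : ℤ) - (lam0 : ℤ)) ≤ (lam0 : ℤ) - 1 := by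
    have := hlow.trans (le_of_eq hkey)
    have h1' : (inDeg tail head F U : ℤ) ≥ 1 := by exact_mod_cast hin
    have h2' : (outDeg tail head F U : ℤ) ≤ (lam0 : ℤ) := by exact_mod_cast hout
    linarith
  have hm' : (2 : ℤ) ≤ (m : ℤ) := by exact_mod_cast hm
  have hk' : (lam0 : ℤ) + 1 ≤ (k : ℤ) := by exact_mod_cast hk
  have h3' : 3 * (lam0 : ℤ) ≤ 2 * (k : ℤ) := by exact_mod_cast h3
  nlinarith [hmain, hm', hk', h3']
end
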